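/- arXiv:1809.07637 — 15 statements merged into one kernel-verified Lean document; each statement's English description precedes it below -/
import Mathlib

section
/- Given a network allocation problem (G, α, β), an allocation state exists if and only if for every subset D ⊆ X one has Σ_{x∈D} α_x ≤ Σ_{y∈N(D)} β_y. -/
open Finset

/-- A partial allocation state: `W x y` is zero off the edge set, row sums are
bounded by `α` and column sums are bounded by `β`. -/
def IsPartialAlloc {X : Type*} [Fintype X] (E : X → X → Prop) (α β : X → ℕ)
    (W : X → X → ℕ) : Prop :=
  (∀ x y, ¬ E x y → W x y = 0) ∧
  (∀ x, ∑ y, W x y ≤ α x) ∧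
  (∀ y, ∑ x, W x y ≤ β y)

/-- An allocation state: a partial allocation state whose row sums equal `α`. -/
def IsAlloc {X : Type*} [Fintype X] (E : X → X → Prop) (α β : X → ℕ)
    (W : X → X → ℕ) : Prop :=
  IsPartialAlloc E α β W ∧ ∀ x, ∑ y, W x y = α x

/-- The out-neighborhood `N(D)` of a set of units `D`. -/
def NSet {X : Type*} [Fintype X] (E : X → X → Prop) [DecidableRel E]
    (D : Finset X) : Finset X :=
  univ.filter fun y => ∃ x ∈ D, E x y

/-! Hall's marriage theorem with multiplicities. Replace each unit `x` by `α x` demand copies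
and each unit `y` by `β y` capacity copies, a demand copy of `x` being adjacent to every capacity
copy of each `y ∈ N_x`. A family of demand copies projecting onto `D` has at most `Σ_{x∈D} α_x`
members and sees all `Σ_{y∈N(D)} β_y` capacity copies over `N(D)`, so the condition on `D` gives
Hall's condition for the copies. A matching of the copies then yields the allocation state
`W x y = #{copies of x matched into copies of y}`. -/

section

variable {X : Type*} [Fintype X] {E : X → X → Prop} {α β : X → ℕ}

theorem sum_le_sum_NSet_of_isAlloc [DecidableRel E] {W : X → X → ℕ} (hW : IsAlloc E α β W)
    (D : Finset X) :
    ∑ x ∈ D, α x ≤ ∑ y ∈ NSet E D, β y := by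
  obtain ⟨⟨hW_edge, -, hW_col⟩, hW_row⟩ := hW
  have hW_out : ∀ x ∈ D, ∀ y ∉ NSet E D, W x y = 0 := fun x hx y hy =>
    hW_edge x y fun hxy => hy (by simpa [NSet] using ⟨x, hx, hxy⟩)
  calc ∑ x ∈ D, α x
      = ∑ x ∈ D, ∑ y ∈ NSet E D, W x y := by
        refine sum_congr rfl fun x hx => ?_
        rw [← hW_row, ← sum_subset (subset_univ _) fun y _ hy => hW_out x hx y hy]
    _ = ∑ y ∈ NSet E D, ∑ x ∈ D, W x y := sum_comm
    _ ≤ ∑ y ∈ NSet E D, ∑ x, W x y := sum_le_sum fun y _ => sum_le_sum_of_subset (subset_univ D)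
    _ ≤ ∑ y ∈ NSet E D, β y := sum_le_sum fun y _ => hW_col y

variable [DecidableEq X]

theorem card_filter_sigma_fst_eq {σ : X → Type*} [∀ x, Fintype (σ x)] (x : X) :
    #{p : Σ x, σ x | p.1 = x} = Fintype.card (σ x) := by
  have : ({p | p.1 = x} : Finset (Σ x, σ x)) = ({x} : Finset X).sigma fun _ => univ := by
    ext ⟨a, i⟩
    simp
  rw [this, card_sigma, sum_singleton, card_univ]

theorem isAlloc_of_injective {f : (Σ x, Fin (α x)) → Σ y, Fin (β y)}
    (hf : Function.Injective f) (hfE : ∀ p, E p.1 (f p).1) :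
    IsAlloc E α β fun x y => #{p | p.1 = x ∧ (f p).1 = y} := by
  have hrow : ∀ x, ∑ y, #{p | p.1 = x ∧ (f p).1 = y} = α x := fun x => by
    rw [← Fintype.card_fin (α x), ← card_filter_sigma_fst_eq (σ := fun x => Fin (α x)) x,
      card_eq_sum_card_fiberwise (f := fun p => (f p).1) (t := univ) fun _ _ => mem_univ _]
    simp only [filter_filter]
  refine ⟨⟨fun x y hxy => ?_, fun x => (hrow x).le, fun y => ?_⟩, hrow⟩
  · refine card_eq_zero.2 (filter_eq_empty_iff.2 ?_)
    rintro p - ⟨rfl, rfl⟩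
    exact hxy (hfE p)
  · calc ∑ x, #{p | p.1 = x ∧ (f p).1 = y}
        = #{p | (f p).1 = y} := by
          rw [card_eq_sum_card_fiberwise (f := Sigma.fst) (t := univ) fun _ _ => mem_univ _]
          simp only [filter_filter, and_comm]
      _ ≤ #{q : Σ y, Fin (β y) | q.1 = y} :=
          card_le_card_of_injOn f (fun p hp => by simpa using hp) hf.injOn
      _ = β y := by rw [card_filter_sigma_fst_eq, Fintype.card_fin]

variable [DecidableRel E]

theorem card_le_card_biUnion_of_sum_le_sum_NSet
    (hall : ∀ D : Finset X, ∑ x ∈ D, α x ≤ ∑ y ∈ NSet E D, β y)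
    (s : Finset (Σ x, Fin (α x))) :
    #s ≤ #(s.biUnion fun p => {q : Σ y, Fin (β y) | E p.1 q.1}) := by
  set D := s.image Sigma.fst
  calc #s
      ≤ #(D.sigma fun x => (univ : Finset (Fin (α x)))) :=
        card_le_card fun p hp => by simpa [D] using ⟨p.2, hp⟩
    _ = ∑ x ∈ D, α x := by simp [card_sigma]
    _ ≤ ∑ y ∈ NSet E D, β y := hall D
    _ = #((NSet E D).sigma fun y => (univ : Finset (Fin (β y)))) := by simp [card_sigma]
    _ ≤ #(s.biUnion fun p => {q : Σ y, Fin (β y) | E p.1 q.1}) := by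
        refine card_le_card fun q hq => ?_
        simpa only [D, NSet, mem_sigma, mem_filter, mem_univ, true_and, and_true, mem_image,
          exists_exists_and_eq_and, mem_biUnion] using hq

end

/-- an allocation state exists iff
`Σ_{x∈D} α_x ≤ Σ_{y∈N(D)} β_y` for every subset `D ⊆ X`. -/
theorem allocation_exists_iff {X : Type*} [Fintype X] [DecidableEq X]
    (E : X → X → Prop) [DecidableRel E] (α β : X → ℕ) :
    (∃ W : X → X → ℕ, IsAlloc E α β W) ↔
      ∀ D : Finset X, ∑ x ∈ D, α x ≤ ∑ y ∈ NSet E D, β y := by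
  refine ⟨fun ⟨_, hW⟩ => sum_le_sum_NSet_of_isAlloc hW, fun hall => ?_⟩
  obtain ⟨f, hf, hfE⟩ := (all_card_le_biUnion_card_iff_exists_injective _).1
    (card_le_card_biUnion_of_sum_le_sum_NSet hall)
  exact ⟨_, isAlloc_of_injective hf fun p => by simpa using hfE p⟩
end

section
/- Suppose G is the complete directed graph on X, i.e. E = {(x,y) : x ≠ y}. Then an allocation state exists if and only if both: (a) α_x ≤ Σ_{y≠x} β_y for every x ∈ X, and (b) Σ_{x∈X} α_x ≤ Σ_{y∈X} β_y. -/
open Finset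

/-!
Unit `x` has `α x` demand slots `⟨x, i⟩ : Σ x, Fin (α x)` and unit `y` has `β y` capacity slots,
and a demand slot of `x` may go to a capacity slot of `y` when `E x y`. Counting an injective
assignment of demand slots to capacity slots fiberwise gives an allocation state, so by Hall's
marriage theorem one exists iff `∑ x ∈ D, α x ≤ ∑ y ∈ N(D), β y` for every `D`, where
`N(D) = neighbors E D`. On the complete graph `N(D)` is empty for `D = ∅`, equals `univ.erase x`
for `D = {x}` and is everything once `D` has two elements, so Hall's condition reduces to (a)
and (b).
-/

theorem card_sigma_univ_fin {X : Type*} (D : Finset X) (α : X → ℕ) :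
    #(D.sigma fun x => (univ : Finset (Fin (α x)))) = ∑ x ∈ D, α x := by
  simp [card_sigma]

section Allocation

variable {X : Type*} [Fintype X]

def neighbors (E : X → X → Prop) [DecidableRel E] (D : Finset X) : Finset X :=
  {y | ∃ x ∈ D, E x y}

theorem IsAlloc.sum_le_sum_neighbors {E : X → X → Prop} [DecidableRel E] {α β : X → ℕ}
    {W : X → X → ℕ} (hW : IsAlloc E α β W) (D : Finset X) :
    ∑ x ∈ D, α x ≤ ∑ y ∈ neighbors E D, β y := by
  obtain ⟨⟨hoff, -, hcol⟩, hrow⟩ := hW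
  calc ∑ x ∈ D, α x = ∑ x ∈ D, ∑ y ∈ neighbors E D, W x y := by
        refine sum_congr rfl fun x hx => ?_
        rw [← hrow x]
        refine (sum_subset (subset_univ _) fun y _ hy => hoff x y fun hxy => hy ?_).symm
        exact mem_filter.2 ⟨mem_univ y, x, hx, hxy⟩
    _ = ∑ y ∈ neighbors E D, ∑ x ∈ D, W x y := sum_comm
    _ ≤ ∑ y ∈ neighbors E D, β y :=
        sum_le_sum fun y _ => (sum_le_univ_sum_of_nonneg fun _ => Nat.zero_le _).trans (hcol y)

variable [DecidableEq X] {α β : X → ℕ}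

def allocOfSlotMap (f : (Σ x, Fin (α x)) → Σ y, Fin (β y)) (x y : X) : ℕ :=
  #{i | (f ⟨x, i⟩).1 = y}

theorem isAlloc_allocOfSlotMap {E : X → X → Prop} {f : (Σ x, Fin (α x)) → Σ y, Fin (β y)}
    (hf : Function.Injective f) (hfE : ∀ p, E p.1 (f p).1) : IsAlloc E α β (allocOfSlotMap f) := by
  have hrow (x : X) : ∑ y, allocOfSlotMap f x y = α x := by
    unfold allocOfSlotMap
    rw [← card_eq_sum_card_fiberwise fun _ _ => mem_univ _, card_univ, Fintype.card_fin]
  refine ⟨⟨fun x y hxy => ?_, fun x => (hrow x).le, fun y => ?_⟩, hrow⟩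
  · refine card_eq_zero.2 (filter_eq_empty_iff.2 fun i _ hi => hxy ?_)
    exact hi ▸ hfE ⟨x, i⟩
  · calc ∑ x, allocOfSlotMap f x y = #(univ.sigma fun x => {i | (f ⟨x, i⟩).1 = y}) :=
          (card_sigma _ _).symm
      _ ≤ #(({y} : Finset X).sigma fun y => (univ : Finset (Fin (β y)))) := by
          refine card_le_card_of_injOn f (fun p hp => ?_) hf.injOn
          simp only [coe_sigma, Set.mem_sigma_iff, coe_filter] at hp ⊢
          simpa using hp.2
      _ = β y := by simp

theorem card_le_card_filter_of_sum_le_sum_neighbors {E : X → X → Prop} [DecidableRel E]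
    (h : ∀ D : Finset X, ∑ x ∈ D, α x ≤ ∑ y ∈ neighbors E D, β y)
    (A : Finset (Σ x, Fin (α x))) :
    #A ≤ #{q : Σ y, Fin (β y) | ∃ p ∈ A, E p.1 q.1} := by
  set D := A.image Sigma.fst
  calc #A ≤ #(D.sigma fun x => (univ : Finset (Fin (α x)))) :=
        card_le_card fun p hp => mem_sigma.2 ⟨mem_image_of_mem _ hp, mem_univ _⟩
    _ = ∑ x ∈ D, α x := card_sigma_univ_fin D α
    _ ≤ ∑ y ∈ neighbors E D, β y := h D
    _ = #((neighbors E D).sigma fun y => (univ : Finset (Fin (β y)))) :=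
        (card_sigma_univ_fin _ β).symm
    _ = #{q : Σ y, Fin (β y) | ∃ p ∈ A, E p.1 q.1} := by
        congr 1
        ext q
        simp [neighbors, D]

theorem exists_isAlloc_iff (E : X → X → Prop) [DecidableRel E] :
    (∃ W, IsAlloc E α β W) ↔ ∀ D : Finset X, ∑ x ∈ D, α x ≤ ∑ y ∈ neighbors E D, β y := by
  refine ⟨fun ⟨W, hW⟩ => hW.sum_le_sum_neighbors, fun h => ?_⟩
  obtain ⟨f, hf, hfE⟩ := (Fintype.all_card_le_filter_rel_iff_exists_injective
    (fun (p : Σ x, Fin (α x)) (q : Σ y, Fin (β y)) => E p.1 q.1)).1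
    (card_le_card_filter_of_sum_le_sum_neighbors h)
  exact ⟨_, isAlloc_allocOfSlotMap hf hfE⟩

theorem neighbors_ne_singleton (x : X) : neighbors (· ≠ ·) {x} = univ.erase x := by
  ext y
  simp [neighbors, eq_comm]

theorem neighbors_ne_of_nontrivial {D : Finset X} (hD : D.Nontrivial) :
    neighbors (· ≠ ·) D = univ :=
  eq_univ_of_forall fun y => by simpa [neighbors] using hD.exists_ne y

end Allocation

/-- for the complete directed graph (`E x y ↔ x ≠ y`), an
allocation state exists iff `α x ≤ Σ_{y ≠ x} β y` for every `x` and
`Σ_x α x ≤ Σ_y β y`. -/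
theorem allocation_exists_iff_complete {X : Type*} [Fintype X] [DecidableEq X]
    (E : X → X → Prop) (hE : ∀ x y, E x y ↔ x ≠ y) (α β : X → ℕ) :
    (∃ W : X → X → ℕ, IsAlloc E α β W) ↔
      ((∀ x : X, α x ≤ ∑ y ∈ univ.erase x, β y) ∧ ∑ x, α x ≤ ∑ y, β y) := by
  obtain rfl : E = (· ≠ ·) := by ext x y; exact hE x y
  rw [exists_isAlloc_iff]
  constructor
  · intro h
    refine ⟨fun x => by simpa [neighbors_ne_singleton] using h {x}, (h univ).trans ?_⟩
    exact sum_le_univ_sum_of_nonneg fun _ => Nat.zero_le _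
  · rintro ⟨hsingle, htotal⟩ D
    rcases D.eq_empty_or_nonempty with rfl | hD
    · simp
    obtain ⟨x, rfl⟩ | hD := hD.exists_eq_singleton_or_nontrivial
    · simpa [neighbors_ne_singleton] using hsingle x
    · rw [neighbors_ne_of_nontrivial hD]
      exact (sum_le_univ_sum_of_nonneg fun _ => Nat.zero_le _).trans htotal
end

section
/- Let G = (X, E) be a directed graph in which every unit x satisfies |N_x| ≥ d_min with d_min ≥ 1, and every unit y satisfies |N⁻_y| ≤ d⁻_max. Let a = max_x α_x and b = min_y β_y, and assume a · d⁻_max ≤ b · d_min. Then an allocation state exists. -/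
open Finset

/-!
Split every unit `x` into `α x` demand tokens and every unit `y` into `β y` capacity tokens, a
demand token of `x` being compatible with the capacity tokens of the out-neighbours of `x`.
A matching of all demand tokens is an allocation state, and by Hall's theorem it exists as soon
as `∑_{x ∈ D} α x ≤ ∑_{y ∈ N(D)} β y` for every `D`. Under the degree assumptions double counting
the edges from `D` to `N(D)` gives `|D| · dmin ≤ |N(D)| · dmax`, hence
`(∑_{x ∈ D} α x) · dmin ≤ |D| · a · dmin ≤ |N(D)| · b · dmin ≤ (∑_{y ∈ N(D)} β y) · dmin`
for any `a ≥ α` and `b ≤ β` with `a · dmax ≤ b · dmin`.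
-/

section Tokens

variable {X : Type*} [Fintype X] [DecidableEq X]

lemma card_filter_sigma_fst_mem (γ : X → ℕ) (S : Finset X) :
    #{q : Σ x, Fin (γ x) | q.1 ∈ S} = ∑ x ∈ S, γ x := by
  have : ({q : Σ x, Fin (γ x) | q.1 ∈ S} : Finset _) = S.sigma fun _ => univ := by
    ext q
    simp
  simp [this, card_sigma]

lemma card_filter_sigma_fst_eq_s5 (γ : X → ℕ) (x : X) :
    #{q : Σ x, Fin (γ x) | q.1 = x} = γ x := by
  simpa using card_filter_sigma_fst_mem γ {x}

def allocOfTokens {α β : X → ℕ} (f : (Σ x, Fin (α x)) → Σ y, Fin (β y)) (x y : X) : ℕ :=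
  #{p | p.1 = x ∧ (f p).1 = y}

lemma isAlloc_allocOfTokens (E : X → X → Prop) {α β : X → ℕ}
    {f : (Σ x, Fin (α x)) → Σ y, Fin (β y)} (hf : Function.Injective f)
    (hfE : ∀ p, E p.1 (f p).1) : IsAlloc E α β (allocOfTokens f) := by
  have row_sum : ∀ x, ∑ y, allocOfTokens f x y = α x := fun x => by
    rw [← card_filter_sigma_fst_eq_s5 α x,
      card_eq_sum_card_fiberwise (f := fun p => (f p).1) (t := univ) fun _ _ => mem_univ _]
    simp only [allocOfTokens, filter_filter]
  refine ⟨⟨fun x y hxy => ?_, fun x => (row_sum x).le, fun y => ?_⟩, row_sum⟩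
  · refine card_eq_zero.2 (filter_eq_empty_iff.2 ?_)
    rintro p - ⟨rfl, rfl⟩
    exact hxy (hfE p)
  · calc ∑ x, allocOfTokens f x y = #{p | (f p).1 = y} := by
          rw [card_eq_sum_card_fiberwise (f := Sigma.fst) (t := univ) fun _ _ => mem_univ _]
          simp only [allocOfTokens, filter_filter, and_comm]
      _ ≤ #{q : Σ y, Fin (β y) | q.1 = y} :=
          card_le_card_of_injOn f (fun p hp => by simpa using hp) hf.injOn
      _ = β y := card_filter_sigma_fst_eq_s5 β y

theorem exists_isAlloc_of_sum_le_sum_nbhd (E : X → X → Prop) [DecidableRel E] (α β : X → ℕ)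
    (hall : ∀ D : Finset X, ∑ x ∈ D, α x ≤ ∑ y ∈ {y | ∃ x ∈ D, E x y}, β y) :
    ∃ W : X → X → ℕ, IsAlloc E α β W := by
  have token_hall : ∀ A : Finset (Σ x, Fin (α x)),
      #A ≤ #{q : Σ y, Fin (β y) | ∃ p ∈ A, E p.1 q.1} := fun A => by
    set D := A.image Sigma.fst
    calc #A ≤ #{p : Σ x, Fin (α x) | p.1 ∈ D} :=
          card_le_card fun p hp => mem_filter.2 ⟨mem_univ p, mem_image_of_mem _ hp⟩
      _ = ∑ x ∈ D, α x := card_filter_sigma_fst_mem α D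
      _ ≤ ∑ y ∈ {y | ∃ x ∈ D, E x y}, β y := hall D
      _ = #{q : Σ y, Fin (β y) | q.1 ∈ ({y | ∃ x ∈ D, E x y} : Finset X)} :=
          (card_filter_sigma_fst_mem β _).symm
      _ = #{q : Σ y, Fin (β y) | ∃ p ∈ A, E p.1 q.1} := by simp [D]
  obtain ⟨f, hf, hfE⟩ := (Fintype.all_card_le_filter_rel_iff_exists_injective
    fun (p : Σ x, Fin (α x)) (q : Σ y, Fin (β y)) => E p.1 q.1).1 token_hall
  exact ⟨_, isAlloc_allocOfTokens E hf hfE⟩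

end Tokens

section Degrees

variable {X : Type*} [Fintype X] (E : X → X → Prop) [DecidableRel E]

lemma card_mul_le_card_nbhd_mul {dmin dmax : ℕ}
    (hout : ∀ x, dmin ≤ #{y | E x y}) (hin : ∀ y, #{x | E x y} ≤ dmax) (D : Finset X) :
    #D * dmin ≤ #({y | ∃ x ∈ D, E x y} : Finset X) * dmax := by
  refine card_mul_le_card_mul E (fun x hx => (hout x).trans (card_le_card ?_))
    fun y _ => (card_le_card (filter_subset_filter _ (subset_univ D))).trans (hin y)
  intro y hy
  simp only [bipartiteAbove, mem_filter, mem_univ, true_and] at hy ⊢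
  exact ⟨⟨x, hx, hy⟩, hy⟩

lemma sum_le_sum_nbhd_of_degrees {α β : X → ℕ} {a b dmin dmax : ℕ} (hdmin : 0 < dmin)
    (hα : ∀ x, α x ≤ a) (hβ : ∀ y, b ≤ β y)
    (hout : ∀ x, dmin ≤ #{y | E x y}) (hin : ∀ y, #{x | E x y} ≤ dmax)
    (h : a * dmax ≤ b * dmin) (D : Finset X) :
    ∑ x ∈ D, α x ≤ ∑ y ∈ {y | ∃ x ∈ D, E x y}, β y := by
  set N : Finset X := {y | ∃ x ∈ D, E x y}
  refine Nat.le_of_mul_le_mul_right ?_ hdmin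
  calc (∑ x ∈ D, α x) * dmin ≤ (#D * dmin) * a := by
        rw [mul_right_comm]
        exact Nat.mul_le_mul_right _ (sum_le_card_nsmul D α a fun x _ => hα x)
    _ ≤ (#N * dmax) * a := Nat.mul_le_mul_right _ (card_mul_le_card_nbhd_mul E hout hin D)
    _ = #N * (a * dmax) := by ring
    _ ≤ #N * (b * dmin) := Nat.mul_le_mul_left _ h
    _ = (#N * b) * dmin := by ring
    _ ≤ (∑ y ∈ N, β y) * dmin :=
        Nat.mul_le_mul_right _ (card_nsmul_le_sum N β b fun y _ => hβ y)

end Degrees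

theorem allocation_exists_of_degrees_general {X : Type*} [Fintype X]
    [Nonempty X] (E : X → X → Prop) [DecidableRel E] (α β : X → ℕ)
    (dmin dmax : ℕ) (hdmin : 1 ≤ dmin)
    (hout : ∀ x : X, dmin ≤ (univ.filter fun y => E x y).card)
    (hin : ∀ y : X, (univ.filter fun x => E x y).card ≤ dmax)
    (h : (univ.sup α) * dmax ≤ (univ.inf' univ_nonempty β) * dmin) :
    ∃ W : X → X → ℕ, IsAlloc E α β W := by
  classical
  exact exists_isAlloc_of_sum_le_sum_nbhd E α β
    (sum_le_sum_nbhd_of_degrees E hdmin (fun x => le_sup (mem_univ x))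
      (fun y => inf'_le β (mem_univ y)) hout hin h)

/-- if every out-degree is at least `dmin ≥ 1`, every in-degree is
at most `dmax`, and `(max_x α_x) · dmax ≤ (min_y β_y) · dmin`, then an
allocation state exists. -/
theorem allocation_exists_of_degrees {X : Type*} [Fintype X] [DecidableEq X]
    [Nonempty X] (E : X → X → Prop) [DecidableRel E] (α β : X → ℕ)
    (dmin dmax : ℕ) (hdmin : 1 ≤ dmin)
    (hout : ∀ x : X, dmin ≤ (univ.filter fun y => E x y).card)
    (hin : ∀ y : X, (univ.filter fun x => E x y).card ≤ dmax)
    (h : (univ.sup α) * dmax ≤ (univ.inf' univ_nonempty β) * dmin) :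
    ∃ W : X → X → ℕ, IsAlloc E α β W :=
  allocation_exists_of_degrees_general E α β dmin dmax hdmin hout hin h
end

section
/- For every pair of partial allocation states W, W' ∈ 𝒲_p and every unit x̄ ∈ X such that W_{xy} = W'_{xy} for all x ≠ x̄ and all y, one has U_{x̄}(W') − U_{x̄}(W) = Ψ(W') − Ψ(W); that is, the game with utilities U_x is a potential game with potential function Ψ. -/
open Finset

/-- The separable functional `Ψ(W) = Σ_x f_x(W_{x·}) + Σ_y g_y(W_{·y})`. -/
def Psi {X : Type*} [Fintype X] (f g : X → (X → ℕ) → ℝ) (W : X → X → ℕ) : ℝ :=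
  ∑ x, f x (W x) + ∑ y, g y (fun x => W x y)

/-- The utility of unit `x`: `U_x(W) = f_x(W_{x·}) + Σ_{y ∈ N_x} g_y(W_{·y})`. -/
def Util {X : Type*} [Fintype X] (E : X → X → Prop) [DecidableRel E]
    (f g : X → (X → ℕ) → ℝ) (x : X) (W : X → X → ℕ) : ℝ :=
  f x (W x) + ∑ y ∈ univ.filter (fun y => E x y), g y (fun x' => W x' y)

/-! Changing only row `xbar` changes `Ψ` by the change of `f xbar` plus the changes of the
column terms `g y`. Column `y` can only change if `W xbar y` may be nonzero, which for partial
allocation states forces `E xbar y`; so these are exactly the terms of `U_xbar`. -/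

theorem Fintype.sum_sub_sum_eq_sub_of_eq_off {ι M : Type*} [Fintype ι] [AddCommGroup M]
    (F G : ι → M) (a : ι) (h : ∀ i, i ≠ a → F i = G i) :
    ∑ i, F i - ∑ i, G i = F a - G a := by
  rw [← sum_sub_distrib]
  exact Fintype.sum_eq_single a fun i hi => sub_eq_zero.mpr (h i hi)

theorem column_eq_of_rows_eq_off {X M : Type*} (W W' : X → X → M) {xbar y : X}
    (hrow : ∀ x, x ≠ xbar → ∀ y, W' x y = W x y)
    (hy : W' xbar y = W xbar y) : (fun x => W' x y) = fun x => W x y := by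
  funext x
  by_cases hx : x = xbar
  · rw [hx, hy]
  · exact hrow x hx y

section PotentialGame

variable {X : Type*} [Fintype X] (f g : X → (X → ℕ) → ℝ) (W W' : X → X → ℕ)

theorem Psi_sub_of_rows_eq_off (xbar : X) (hrow : ∀ x, x ≠ xbar → ∀ y, W' x y = W x y) :
    Psi f g W' - Psi f g W = f xbar (W' xbar) - f xbar (W xbar) +
      ∑ y, (g y (fun x => W' x y) - g y (fun x => W x y)) := by
  have hf : ∑ x, f x (W' x) - ∑ x, f x (W x) = f xbar (W' xbar) - f xbar (W xbar) :=
    Fintype.sum_sub_sum_eq_sub_of_eq_off _ _ xbar fun x hx => by rw [funext (hrow x hx)]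
  rw [sum_sub_distrib, ← hf]
  unfold Psi
  ring

theorem Util_sub (E : X → X → Prop) [DecidableRel E] (x : X) :
    Util E f g x W' - Util E f g x W = f x (W' x) - f x (W x) +
      ∑ y ∈ univ.filter (fun y => E x y), (g y (fun x' => W' x' y) - g y (fun x' => W x' y)) := by
  rw [sum_sub_distrib]
  unfold Util
  ring

end PotentialGame

theorem potential_game_general {X : Type*} [Fintype X]
    (E : X → X → Prop) [DecidableRel E] (α β : X → ℕ)
    (f g : X → (X → ℕ) → ℝ) (W W' : X → X → ℕ)
    (hW : IsPartialAlloc E α β W) (hW' : IsPartialAlloc E α β W')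
    (xbar : X) (hrow : ∀ x, x ≠ xbar → ∀ y, W' x y = W x y) :
    Util E f g xbar W' - Util E f g xbar W = Psi f g W' - Psi f g W := by
  rw [Util_sub, Psi_sub_of_rows_eq_off f g W W' xbar hrow]
  congr 1
  refine sum_filter_of_ne fun y _ hy => ?_
  by_contra hE
  refine hy (sub_eq_zero.mpr ?_)
  rw [column_eq_of_rows_eq_off W W' hrow (by rw [hW.1 _ _ hE, hW'.1 _ _ hE])]

/-- the game with utilities `U_x` is a potential game with
potential `Ψ`: if the partial allocation states `W, W'` agree on every row
`x ≠ xbar`, then `U_{xbar}(W') − U_{xbar}(W) = Ψ(W') − Ψ(W)`. -/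
theorem potential_game {X : Type*} [Fintype X] [DecidableEq X]
    (E : X → X → Prop) [DecidableRel E] (α β : X → ℕ)
    (f g : X → (X → ℕ) → ℝ) (W W' : X → X → ℕ)
    (hW : IsPartialAlloc E α β W) (hW' : IsPartialAlloc E α β W')
    (xbar : X) (hrow : ∀ x, x ≠ xbar → ∀ y, W' x y = W x y) :
    Util E f g xbar W' - Util E f g xbar W = Psi f g W' - Psi f g W :=
  potential_game_general E α β f g W W' hW hW' xbar hrow
end

section
/- If W* ∈ 𝒲_p maximizes Ψ over the set 𝒲_p of partial allocation states, then W* is a (generalized) Nash equilibrium: for every unit x̄ ∈ X and every W' ∈ 𝒲_p with W'_{xy} = W*_{xy} for all x ≠ x̄ and all y, one has U_{x̄}(W*) ≥ U_{x̄}(W'). -/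
open Finset

/-!
`Ψ` is an exact potential for the utilities: a unilateral deviation of `x̄` changes only row `x̄`,
hence only the term `f_x̄` and the columns `g_y`; by (P1) row `x̄` vanishes off `N_x̄` in both
states, so only the columns `y ∈ N_x̄` change, and these are exactly the terms of `U_x̄`. Thus
`U_x̄(W') - U_x̄(W*) = Ψ(W') - Ψ(W*) ≤ 0`.
-/

theorem Finset.sum_sub_sum_eq_sum_sub_sum_of_eq_off {ι M : Type*} [Fintype ι] [AddCommGroup M]
    (s : Finset ι) {φ ψ : ι → M} (h : ∀ i ∉ s, φ i = ψ i) :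
    ∑ i, φ i - ∑ i, ψ i = ∑ i ∈ s, φ i - ∑ i ∈ s, ψ i := by
  rw [← Finset.sum_sub_distrib, ← Finset.sum_sub_distrib]
  refine (Finset.sum_subset (Finset.subset_univ s) fun i _ hi => ?_).symm
  rw [h i hi, sub_self]

theorem psi_sub_psi_eq_util_sub_util {X : Type*} [Fintype X] (E : X → X → Prop) [DecidableRel E]
    (f g : X → (X → ℕ) → ℝ) {xbar : X} {W W' : X → X → ℕ}
    (hrow : ∀ x, x ≠ xbar → W' x = W x) (hcol : ∀ y, ¬ E xbar y → W' xbar y = W xbar y) :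
    Psi f g W' - Psi f g W = Util E f g xbar W' - Util E f g xbar W := by
  have hf : ∑ x, f x (W' x) - ∑ x, f x (W x) = f xbar (W' xbar) - f xbar (W xbar) := by
    rw [Finset.sum_sub_sum_eq_sum_sub_sum_of_eq_off {xbar} fun x hx => ?_, Finset.sum_singleton,
      Finset.sum_singleton]
    rw [hrow x (Finset.notMem_singleton.mp hx)]
  have hg : ∑ y, g y (fun x => W' x y) - ∑ y, g y (fun x => W x y) =
      ∑ y ∈ univ.filter (E xbar), g y (fun x => W' x y) -
        ∑ y ∈ univ.filter (E xbar), g y (fun x => W x y) := by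
    refine Finset.sum_sub_sum_eq_sum_sub_sum_of_eq_off _ fun y hy =>
      congrArg (g y) (funext fun x => ?_)
    by_cases hx : x = xbar
    · subst hx
      exact hcol y fun hE => hy (Finset.mem_filter.mpr ⟨Finset.mem_univ y, hE⟩)
    · rw [hrow x hx]
  unfold Psi Util
  linear_combination hf + hg

theorem maximizer_is_nash_general {X : Type*} [Fintype X]
    (E : X → X → Prop) [DecidableRel E] (α β : X → ℕ)
    (f g : X → (X → ℕ) → ℝ) (Wstar : X → X → ℕ)
    (hWstar : IsPartialAlloc E α β Wstar)
    (hmax : ∀ W : X → X → ℕ, IsPartialAlloc E α β W → Psi f g W ≤ Psi f g Wstar) :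
    ∀ (xbar : X) (W' : X → X → ℕ), IsPartialAlloc E α β W' →
      (∀ x, x ≠ xbar → ∀ y, W' x y = Wstar x y) →
      Util E f g xbar W' ≤ Util E f g xbar Wstar := by
  intro xbar W' hW' hdev
  have hpot := psi_sub_psi_eq_util_sub_util E f g (fun x hx => funext (hdev x hx))
    fun y hy => (hW'.1 xbar y hy).trans (hWstar.1 xbar y hy).symm
  linarith [hmax W' hW']

/-- a maximizer `W*` of `Ψ` over the set of partial allocation
states is a (generalized) Nash equilibrium: no unit `xbar` can strictly improve
its utility by unilaterally changing its row. -/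
theorem maximizer_is_nash {X : Type*} [Fintype X] [DecidableEq X]
    (E : X → X → Prop) [DecidableRel E] (α β : X → ℕ)
    (f g : X → (X → ℕ) → ℝ) (Wstar : X → X → ℕ)
    (hWstar : IsPartialAlloc E α β Wstar)
    (hmax : ∀ W : X → X → ℕ, IsPartialAlloc E α β W → Psi f g W ≤ Psi f g Wstar) :
    ∀ (xbar : X) (W' : X → X → ℕ), IsPartialAlloc E α β W' →
      (∀ x, x ≠ xbar → ∀ y, W' x y = Wstar x y) →
      Util E f g xbar W' ≤ Util E f g xbar Wstar :=
  maximizer_is_nash_general E α β f g Wstar hWstar hmax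
end

section
/- Assume the specific functional form and that C^{all} > 2((max_x α_x)·|C^{agg}| + (max_y β_y)·C^{con}). Then the utilities are monotone with respect to removal of data: if W, W' ∈ 𝒲_p satisfy W'_{xy} = W_{xy} for all x ≠ x̄ and all y, W'_{x̄y} ≤ W_{x̄y} for every y, and W' ≠ W (so that W'^{x̄} < W^{x̄}), then U_{x̄}(W') < U_{x̄}(W). -/
open Finset

/-- The utility of unit `x` for the specific functional form:
`f_x(W_{x·}) = C^{all} Σ_y W_{xy} + C^{agg} Σ_y W_{xy}²` and
`g_y(W_{·y}) = −C^{con} (Σ_x W_{xy})²`. -/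
def UtilSpec {X : Type*} [Fintype X] (E : X → X → Prop) [DecidableRel E]
    (Call Cagg Ccon : ℝ) (x : X) (W : X → X → ℕ) : ℝ :=
  (Call * ∑ y, (W x y : ℝ) + Cagg * ∑ y, (W x y : ℝ) ^ 2) +
    ∑ y ∈ univ.filter (fun y => E x y), -(Ccon * (∑ x', (W x' y : ℝ)) ^ 2)

/-!
Removing data from row `xbar` changes `U_xbar` by `C^{all} D + C^{agg} T₁ - C^{con} T₂`,
where `D` is the (positive) amount removed, `T₁` the drop of `Σ_y W_{xbar y}²` and
`T₂` the drop of the squared column sums over the neighbours of `xbar`. Since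
`a² - b² = (a + b)(a - b) ≤ 2M(a - b)` for `b ≤ a ≤ M`, entries bounded by `max α` and
column sums bounded by `max β` give
`0 ≤ T₁ ≤ 2 (max α) D` and `T₂ ≤ 2 (max β) D`, so the change is at least
`(C^{all} - 2((max α)|C^{agg}| + (max β) C^{con})) D > 0`.
-/

theorem sq_sub_sq_le_two_mul_mul_sub {R : Type*} [CommRing R] [LinearOrder R]
    [IsStrictOrderedRing R] {a b M : R} (hba : b ≤ a) (haM : a ≤ M) :
    a ^ 2 - b ^ 2 ≤ 2 * M * (a - b) := by
  nlinarith

theorem Finset.sum_sq_sub_sq_le {ι R : Type*} [CommRing R] [LinearOrder R]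
    [IsStrictOrderedRing R] (s : Finset ι) {f g : ι → R} {M : R}
    (hgf : ∀ i ∈ s, g i ≤ f i) (hfM : ∀ i ∈ s, f i ≤ M) :
    ∑ i ∈ s, (f i ^ 2 - g i ^ 2) ≤ 2 * M * ∑ i ∈ s, (f i - g i) := by
  rw [mul_sum]
  exact sum_le_sum fun i hi => sq_sub_sq_le_two_mul_mul_sub (hgf i hi) (hfM i hi)

theorem Fintype.sum_sub_sum_of_eq_of_ne {ι R : Type*} [Fintype ι] [AddCommGroup R]
    {f g : ι → R} (a : ι) (h : ∀ i ≠ a, f i = g i) :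
    ∑ i, f i - ∑ i, g i = f a - g a := by
  rw [← sum_sub_distrib, Fintype.sum_eq_single a fun i hi => by rw [h i hi, sub_self]]

section PartialAlloc

variable {X : Type*} [Fintype X] {E : X → X → Prop} {α β : X → ℕ} {W : X → X → ℕ}

theorem IsPartialAlloc.apply_le_sup (hW : IsPartialAlloc E α β W) (x y : X) :
    W x y ≤ univ.sup α :=
  (single_le_sum (fun _ _ => Nat.zero_le _) (mem_univ y)).trans
    ((hW.2.1 x).trans (le_sup (mem_univ x)))

theorem IsPartialAlloc.col_sum_le_sup (hW : IsPartialAlloc E α β W) (y : X) :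
    ∑ x, W x y ≤ univ.sup β :=
  (hW.2.2 y).trans (le_sup (mem_univ y))

end PartialAlloc

theorem UtilSpec_sub_UtilSpec {X : Type*} [Fintype X] (E : X → X → Prop) [DecidableRel E]
    (Call Cagg Ccon : ℝ) (x : X) (W W' : X → X → ℕ) :
    UtilSpec E Call Cagg Ccon x W - UtilSpec E Call Cagg Ccon x W' =
      Call * ∑ y, ((W x y : ℝ) - W' x y) +
        Cagg * ∑ y, ((W x y : ℝ) ^ 2 - (W' x y : ℝ) ^ 2) -
        Ccon * ∑ y ∈ univ.filter (fun y => E x y),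
          ((∑ x', (W x' y : ℝ)) ^ 2 - (∑ x', (W' x' y : ℝ)) ^ 2) := by
  simp only [UtilSpec, sum_sub_distrib, sum_neg_distrib, ← mul_sum]
  ring

theorem exists_apply_lt_of_ne_of_eq_of_ne {X Y : Type*} {W W' : X → Y → ℕ} {xbar : X}
    (hoff : ∀ x, x ≠ xbar → ∀ y, W' x y = W x y) (hle : ∀ y, W' xbar y ≤ W xbar y)
    (hne : W' ≠ W) : ∃ y, W' xbar y < W xbar y := by
  by_contra! h
  refine hne (funext fun x => funext fun y => ?_)
  rcases eq_or_ne x xbar with rfl | hx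
  · exact (hle y).antisymm (h y)
  · exact hoff x hx y

theorem sub_mul_pos_of_bounds {Call Cagg Ccon A B D T₁ T₂ : ℝ} (hCcon : 0 ≤ Ccon)
    (hmono : 2 * (A * |Cagg| + B * Ccon) < Call) (hD : 0 < D)
    (hT₁ : 0 ≤ T₁) (hT₁D : T₁ ≤ 2 * A * D) (hT₂D : T₂ ≤ 2 * B * D) :
    0 < Call * D + Cagg * T₁ - Ccon * T₂ := by
  have hagg : -(|Cagg| * (2 * A * D)) ≤ Cagg * T₁ := by
    nlinarith [neg_abs_le Cagg, mul_le_mul_of_nonneg_left hT₁D (abs_nonneg Cagg)]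
  have hcon : Ccon * T₂ ≤ Ccon * (2 * B * D) := mul_le_mul_of_nonneg_left hT₂D hCcon
  nlinarith [mul_lt_mul_of_pos_right hmono hD]

theorem utility_monotone_general {X : Type*} [Fintype X]
    (E : X → X → Prop) [DecidableRel E] (α β : X → ℕ)
    (Call Cagg Ccon : ℝ) (hCcon : 0 < Ccon)
    (hmono : 2 * (((univ.sup α : ℕ) : ℝ) * |Cagg| + ((univ.sup β : ℕ) : ℝ) * Ccon) < Call)
    (W W' : X → X → ℕ)
    (hW : IsPartialAlloc E α β W)
    (xbar : X) (hoff : ∀ x, x ≠ xbar → ∀ y, W' x y = W x y)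
    (hle : ∀ y, W' xbar y ≤ W xbar y) (hne : W' ≠ W) :
    UtilSpec E Call Cagg Ccon xbar W' < UtilSpec E Call Cagg Ccon xbar W := by
  have hle' : ∀ y, (W' xbar y : ℝ) ≤ W xbar y := fun y => by exact_mod_cast hle y
  have hcol : ∀ y, ∑ x, (W x y : ℝ) - ∑ x, (W' x y : ℝ) = W xbar y - W' xbar y := fun y =>
    Fintype.sum_sub_sum_of_eq_of_ne xbar fun x hx => by rw [hoff x hx y]
  obtain ⟨y₀, hy₀⟩ := exists_apply_lt_of_ne_of_eq_of_ne hoff hle hne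
  have hD : 0 < ∑ y, ((W xbar y : ℝ) - W' xbar y) :=
    sum_pos' (fun y _ => sub_nonneg.2 (hle' y))
      ⟨y₀, mem_univ _, sub_pos.2 (by exact_mod_cast hy₀)⟩
  have hT₁ : 0 ≤ ∑ y, ((W xbar y : ℝ) ^ 2 - (W' xbar y : ℝ) ^ 2) :=
    sum_nonneg fun y _ => sub_nonneg.2 (pow_le_pow_left₀ (Nat.cast_nonneg _) (hle' y) 2)
  have hT₁D := sum_sq_sub_sq_le univ (fun y _ => hle' y)
    (fun y _ => (Nat.cast_le (α := ℝ)).2 (hW.apply_le_sup xbar y))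
  have hT₂D := sum_sq_sub_sq_le (univ.filter fun y => E xbar y)
    (f := fun y => ∑ x, (W x y : ℝ)) (g := fun y => ∑ x, (W' x y : ℝ))
    (M := (univ.sup β : ℕ))
    (fun y _ => by linarith [hcol y, hle' y])
    (fun y _ => by exact_mod_cast hW.col_sum_le_sup y)
  simp only [hcol] at hT₂D
  have hsub : ∑ y ∈ univ.filter (fun y => E xbar y), ((W xbar y : ℝ) - W' xbar y) ≤
      ∑ y, ((W xbar y : ℝ) - W' xbar y) :=
    sum_le_sum_of_subset_of_nonneg (filter_subset _ _) fun y _ _ => sub_nonneg.2 (hle' y)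
  rw [← sub_pos, UtilSpec_sub_UtilSpec]
  exact sub_mul_pos_of_bounds hCcon.le hmono hD hT₁ hT₁D
    (hT₂D.trans (mul_le_mul_of_nonneg_left hsub (by positivity)))

/-- if `C^{all} > 2((max_x α_x)|C^{agg}| + (max_y β_y)C^{con})`,
then utilities are strictly monotone w.r.t. removal of data: removing some of
the data allocated by a unit `xbar` strictly decreases its utility. -/
theorem utility_monotone {X : Type*} [Fintype X] [DecidableEq X] [Nonempty X]
    (E : X → X → Prop) [DecidableRel E] (α β : X → ℕ)
    (Call Cagg Ccon : ℝ) (hCall : 0 < Call) (hCcon : 0 < Ccon)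
    (hmono : 2 * (((univ.sup α : ℕ) : ℝ) * |Cagg| + ((univ.sup β : ℕ) : ℝ) * Ccon) < Call)
    (W W' : X → X → ℕ)
    (hW : IsPartialAlloc E α β W) (hW' : IsPartialAlloc E α β W')
    (xbar : X) (hoff : ∀ x, x ≠ xbar → ∀ y, W' x y = W x y)
    (hle : ∀ y, W' xbar y ≤ W xbar y) (hne : W' ≠ W) :
    UtilSpec E Call Cagg Ccon xbar W' < UtilSpec E Call Cagg Ccon xbar W :=
  utility_monotone_general E α β Call Cagg Ccon hCcon hmono W W' hW xbar hoff hle hne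
end

section
/- Suppose (G, α, β) satisfies the existence condition. Let W ∈ 𝒲_p be a partial allocation state and let x̄ ∈ X be a unit with W^{x̄} < α_{x̄}. Then there exist ȳ ∈ N_{x̄}, an integer t ≥ 0, pairwise distinct resources y_0, y_1, …, y_t ∈ X with y_0 = ȳ, and pairwise distinct units x_0, …, x_{t−1} ∈ X such that: (Sb) for every k = 0, …, t−1 one has W_{x_k y_k} > 0 and (x_k, y_{k+1}) ∈ E (i.e. y_k →_{x_k} y_{k+1} in H_W); and (Sc) W_{y_k} = β_{y_k} for every k = 0, …, t−1, while W_{y_t} < β_{y_t}. -/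
open Finset

/-!
Call the resources reachable in `H_W` from `N_{x̄}` the set `S`, and let `D` consist of `x̄` and of
the units allocating something to `S`. Then `N(D) ⊆ S`, so if every resource of `S` were
saturated the existence condition would give
`∑_D α ≤ ∑_S β = ∑_{x ∈ D} ∑_{y ∈ S} W x y < ∑_D α`, the strict inequality coming from `x̄`.
Hence some reachable resource is unsaturated. A shortest walk to an unsaturated resource is
saturated before its end, and it repeats neither a resource nor a unit: whether `y →_x y'` depends
on `(x, y)` and `(x, y')` separately, so any repetition yields a shorter walk.
-/

section AlternatingWalk

variable {α ι : Type*} {A B : ι → α → Prop} {t : ℕ} {ys : ℕ → α} {xs : ℕ → ι}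

/-- A walk `ys 0 →_{xs 0} ys 1 → ⋯ →_{xs (t-1)} ys t` in `H_W` is the case `A x y := 0 < W x y`,
`B := E`. -/
def IsAlternatingWalk (A B : ι → α → Prop) (t : ℕ) (ys : ℕ → α) (xs : ℕ → ι) : Prop :=
  ∀ k < t, A (xs k) (ys k) ∧ B (xs k) (ys (k + 1))

namespace IsAlternatingWalk

theorem mono (h : IsAlternatingWalk A B t ys xs) {s : ℕ} (hst : s ≤ t) :
    IsAlternatingWalk A B s ys xs :=
  fun k hk => h k (by omega)

theorem update (h : IsAlternatingWalk A B t ys xs) {x : ι} {y : α} (hA : A x (ys t))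
    (hB : B x y) :
    IsAlternatingWalk A B (t + 1) (Function.update ys (t + 1) y) (Function.update xs t x) := by
  intro k hk
  rcases Nat.lt_succ_iff_lt_or_eq.mp hk with hkt | rfl
  · simp only [Function.update_of_ne (show k ≠ t + 1 by omega), Function.update_of_ne hkt.ne,
      Function.update_of_ne (show k + 1 ≠ t + 1 by omega)]
    exact h k hkt
  · simp only [Function.update_self, Function.update_of_ne (show k ≠ k + 1 by omega)]
    exact ⟨hA, hB⟩

/-- Jump from `ys i` directly to `ys (j + 1)` through the unit `xs j`. -/
theorem shortcut (h : IsAlternatingWalk A B t ys xs) {i j : ℕ} (hij : i < j) (hjt : j < t)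
    (hA : A (xs j) (ys i)) :
    IsAlternatingWalk A B (t - (j - i)) (fun k => if k ≤ i then ys k else ys (k + (j - i)))
      (fun k => if k < i then xs k else xs (k + (j - i))) := by
  intro k hk
  rcases lt_trichotomy k i with hki | rfl | hik
  · simp only [if_pos hki.le, if_pos hki, if_pos (show k + 1 ≤ i by omega)]
    exact h k (by omega)
  · simp only [le_refl, if_true, lt_irrefl, if_false, if_neg (show ¬k + 1 ≤ k by omega),
      show k + (j - k) = j by omega, show k + 1 + (j - k) = j + 1 by omega]
    exact ⟨hA, (h j hjt).2⟩
  · simp only [if_neg (show ¬k ≤ i by omega), if_neg (show ¬k < i by omega),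
      if_neg (show ¬k + 1 ≤ i by omega), show k + 1 + (j - i) = k + (j - i) + 1 by omega]
    exact h _ (by omega)

end IsAlternatingWalk

theorem exists_simple_alternatingWalk (P Q : α → Prop)
    (h : ∃ t ys xs, P (ys 0) ∧ IsAlternatingWalk A B t ys xs ∧ Q (ys t)) :
    ∃ t ys xs, P (ys 0) ∧ IsAlternatingWalk A B t ys xs ∧ Q (ys t) ∧ (∀ k < t, ¬Q (ys k)) ∧
      (∀ i j, i < j → j ≤ t → ys i ≠ ys j) ∧ (∀ i j, i < j → j < t → xs i ≠ xs j) := by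
  classical
  obtain ⟨ys, xs, h0, hw, hQ⟩ := Nat.find_spec h
  have hmin {s ys' xs'} (hs : s < Nat.find h) (h0' : P (ys' 0))
      (hw' : IsAlternatingWalk A B s ys' xs') : ¬Q (ys' s) :=
    fun hQ' => Nat.find_min h hs ⟨ys', xs', h0', hw', hQ'⟩
  have hnoQ : ∀ k < Nat.find h, ¬Q (ys k) := fun k hk => hmin hk h0 (hw.mono hk.le)
  have hno_shortcut : ∀ i j, i < j → j < Nat.find h → ¬A (xs j) (ys i) := by
    intro i j hij hjt hA
    refine hmin (show Nat.find h - (j - i) < Nat.find h by omega) (by simpa using h0)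
      (hw.shortcut hij hjt hA) ?_
    simpa only [if_neg (show ¬Nat.find h - (j - i) ≤ i by omega),
      show Nat.find h - (j - i) + (j - i) = Nat.find h by omega] using hQ
  refine ⟨Nat.find h, ys, xs, h0, hw, hQ, hnoQ, fun i j hij hjt hys => ?_,
    fun i j hij hjt hxs => hno_shortcut i j hij hjt (hxs ▸ (hw i (by omega)).1)⟩
  rcases hjt.lt_or_eq with hjt | rfl
  · exact hno_shortcut i j hij hjt (hys ▸ (hw j hjt).1)
  · exact hnoQ i hij (hys ▸ hQ)

theorem exists_injective_alternatingWalk (P Q : α → Prop)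
    (h : ∃ t ys xs, P (ys 0) ∧ IsAlternatingWalk A B t ys xs ∧ Q (ys t)) :
    ∃ (t : ℕ) (ys : Fin (t + 1) → α) (xs : Fin t → ι),
      Function.Injective ys ∧ Function.Injective xs ∧ P (ys 0) ∧
      (∀ k : Fin t, A (xs k) (ys k.castSucc) ∧ B (xs k) (ys k.succ)) ∧
      (∀ k : Fin t, ¬Q (ys k.castSucc)) ∧ Q (ys (Fin.last t)) := by
  obtain ⟨t, ys, xs, h0, hw, hQ, hnoQ, hys, hxs⟩ := exists_simple_alternatingWalk P Q h
  exact ⟨t, fun k => ys k, fun k => xs k,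
    .of_lt_imp_ne fun i j hij => hys i j hij (Nat.lt_succ_iff.mp j.isLt),
    .of_lt_imp_ne fun i j hij => hxs i j hij j.isLt, h0, fun k => hw k k.isLt,
    fun k => hnoQ k k.isLt, hQ⟩

end AlternatingWalk

theorem exists_unsaturated_of_closed {X : Type*} [Fintype X] {E : X → X → Prop}
    [DecidableRel E] {α β : X → ℕ} (hex : ∀ D : Finset X, ∑ x ∈ D, α x ≤ ∑ y ∈ NSet E D, β y)
    {W : X → X → ℕ} (hrow : ∀ x, ∑ y, W x y ≤ α x) {xbar : X} (hxbar : ∑ y, W xbar y < α xbar)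
    (S : Finset X) (hN : ∀ y, E xbar y → y ∈ S)
    (hclosed : ∀ x y y', y ∈ S → 0 < W x y → E x y' → y' ∈ S) :
    ∃ y ∈ S, ∑ x, W x y < β y := by
  classical
  by_contra! hsat
  set D := univ.filter fun x => x = xbar ∨ ∃ y ∈ S, 0 < W x y
  have hxbarD : xbar ∈ D := by simp [D]
  have hND : NSet E D ⊆ S := by
    intro y' hy'
    obtain ⟨x, hxD, hxy'⟩ := by simpa [NSet] using hy'
    obtain rfl | ⟨y, hyS, hxy⟩ := by simpa [D] using hxD
    exacts [hN y' hxy', hclosed x y y' hyS hxy hxy']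
  have hoff : ∀ x ∉ D, ∀ y ∈ S, W x y = 0 := by
    intro x hx y hy
    by_contra hxy
    exact hx (by simpa [D] using Or.inr ⟨y, hy, Nat.pos_of_ne_zero hxy⟩)
  have hrowS : ∀ x, ∑ y ∈ S, W x y ≤ α x :=
    fun x => (sum_le_sum_of_subset (subset_univ S)).trans (hrow x)
  have := calc
    ∑ x ∈ D, α x ≤ ∑ y ∈ S, β y := (hex D).trans (sum_le_sum_of_subset hND)
    _ ≤ ∑ y ∈ S, ∑ x, W x y := sum_le_sum hsat
    _ = ∑ x ∈ D, ∑ y ∈ S, W x y := by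
      rw [sum_comm]
      exact (sum_subset (subset_univ D) fun x _ hx => sum_eq_zero (hoff x hx)).symm
    _ < ∑ x ∈ D, α x := sum_lt_sum (fun x _ => hrowS x)
      ⟨xbar, hxbarD, (sum_le_sum_of_subset (subset_univ S)).trans_lt hxbar⟩
  exact this.false

theorem augmenting_sequence_exists_general {X : Type*} [Fintype X]
    (E : X → X → Prop) [DecidableRel E] (α β : X → ℕ)
    (hex : ∀ D : Finset X, ∑ x ∈ D, α x ≤ ∑ y ∈ NSet E D, β y)
    (W : X → X → ℕ) (hW : IsPartialAlloc E α β W)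
    (xbar : X) (hxbar : ∑ y, W xbar y < α xbar) :
    ∃ ybar : X, E xbar ybar ∧
      ∃ (t : ℕ) (ys : Fin (t + 1) → X) (xs : Fin t → X),
        Function.Injective ys ∧ Function.Injective xs ∧ ys 0 = ybar ∧
        (∀ k : Fin t, 0 < W (xs k) (ys k.castSucc) ∧ E (xs k) (ys k.succ)) ∧
        (∀ k : Fin t, ∑ x, W x (ys k.castSucc) = β (ys k.castSucc)) ∧
        ∑ x, W x (ys (Fin.last t)) < β (ys (Fin.last t)) := by
  classical
  obtain ⟨-, hrow, hcol⟩ := hW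
  let IsWalk := IsAlternatingWalk (fun x y => 0 < W x y) E
  let S := univ.filter fun y => ∃ t ys xs, E xbar (ys 0) ∧ IsWalk t ys xs ∧ ys t = y
  have hS (y : X) : y ∈ S ↔ ∃ t ys xs, E xbar (ys 0) ∧ IsWalk t ys xs ∧ ys t = y := by simp [S]
  obtain ⟨y, hyS, hy⟩ := exists_unsaturated_of_closed hex hrow hxbar S
    (fun y hy => (hS y).2 ⟨0, fun _ => y, fun _ => xbar, hy, fun _ h => absurd h (by omega), rfl⟩)
    (fun x y y' hyS hxy hxy' => by
      obtain ⟨t, ys, xs, h0, hw, rfl⟩ := (hS y).1 hyS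
      exact (hS y').2 ⟨t + 1, _, _, by simpa using h0, hw.update hxy hxy', by simp⟩)
  obtain ⟨t, ys, xs, h0, hw, rfl⟩ := (hS y).1 hyS
  obtain ⟨t, ys, xs, hys, hxs, h0, hw, hsat, hlast⟩ :=
    exists_injective_alternatingWalk (fun y => E xbar y) (fun y => ∑ x, W x y < β y)
      ⟨t, ys, xs, h0, hw, hy⟩
  exact ⟨ys 0, h0, t, ys, xs, hys, hxs, rfl, hw,
    fun k => (hcol _).antisymm (not_lt.mp (hsat k)), hlast⟩

/-- under the existence condition, for every partial allocation
state `W` and every unit `xbar` not fully allocated there are `ȳ ∈ N_{xbar}`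
and a sequence `ȳ = y_0 →_{x_0} y_1 →_{x_1} ⋯ →_{x_{t-1}} y_t` in `H_W` with
pairwise distinct `y_k`'s and pairwise distinct `x_k`'s, all `y_0, …, y_{t-1}`
saturated and `y_t` not saturated. -/
theorem augmenting_sequence_exists {X : Type*} [Fintype X] [DecidableEq X]
    (E : X → X → Prop) [DecidableRel E] (α β : X → ℕ)
    (hex : ∀ D : Finset X, ∑ x ∈ D, α x ≤ ∑ y ∈ NSet E D, β y)
    (W : X → X → ℕ) (hW : IsPartialAlloc E α β W)
    (xbar : X) (hxbar : ∑ y, W xbar y < α xbar) :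
    ∃ ybar : X, E xbar ybar ∧
      ∃ (t : ℕ) (ys : Fin (t + 1) → X) (xs : Fin t → X),
        Function.Injective ys ∧ Function.Injective xs ∧ ys 0 = ybar ∧
        (∀ k : Fin t, 0 < W (xs k) (ys k.castSucc) ∧ E (xs k) (ys k.succ)) ∧
        (∀ k : Fin t, ∑ x, W x (ys k.castSucc) = β (ys k.castSucc)) ∧
        ∑ x, W x (ys (Fin.last t)) < β (ys (Fin.last t)) :=
  augmenting_sequence_exists_general E α β hex W hW xbar hxbar
end

section
/- Suppose (G, α, β) satisfies the existence condition. Let W ∈ 𝒲_p be a partial allocation state and let x̄ ∈ X be a unit with W^{x̄} < α_{x̄}. Then there exist ȳ ∈ N_{x̄} and a resource y' ∈ X reachable from ȳ by a directed path in the graph H_W (possibly y' = ȳ) such that W_{y'} < β_{y'}. -/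
open Finset

/-- The edge relation of the graph `H_W` on resources: `y₁ →_x y₂` iff some
unit `x` has `W_{x y₁} > 0` and `(x, y₂) ∈ E`. -/
def HEdge {X : Type*} (E : X → X → Prop) (W : X → X → ℕ) (y₁ y₂ : X) : Prop :=
  ∃ x, 0 < W x y₁ ∧ E x y₂

/-
Let `S` be the set of resources reachable in `H_W` from a neighbour of `xbar`, and let `D` consist
of `xbar` and of the units that put positive weight on `S`. Every neighbour of a unit of `D` lies
in `S`, since `S` is closed under the edges of `H_W`. If every resource of `S` were saturated, the
existence condition for `D` would give
`∑_D α ≤ ∑_{N(D)} β ≤ ∑_S β ≤ ∑_{y ∈ S} W_y ≤ ∑_{x ∈ D} W^x < ∑_D α`,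
the fourth step because only units of `D` put weight on `S`, the last because `xbar ∈ D` is
deficient.
-/

theorem sum_colSum_le_sum_rowSum_of_support {X : Type*} [Fintype X] (W : X → X → ℕ)
    (D S : Finset X) (hsupp : ∀ x ∉ D, ∀ y ∈ S, W x y = 0) :
    ∑ y ∈ S, ∑ x, W x y ≤ ∑ x ∈ D, ∑ y, W x y :=
  calc ∑ y ∈ S, ∑ x, W x y = ∑ x, ∑ y ∈ S, W x y := sum_comm
    _ = ∑ x ∈ D, ∑ y ∈ S, W x y :=
      (sum_subset (subset_univ D) fun x _ hx => sum_eq_zero (hsupp x hx)).symm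
    _ ≤ ∑ x ∈ D, ∑ y, W x y := sum_le_sum fun _ _ => sum_le_sum_of_subset (subset_univ S)

theorem NSet_subset_of_hEdge_closed {X : Type*} [Fintype X] [DecidableEq X]
    (E : X → X → Prop) [DecidableRel E] (W : X → X → ℕ) (xbar : X) (S : Finset X)
    (hN : ∀ y, E xbar y → y ∈ S)
    (hclosed : ∀ y₁ y₂, HEdge E W y₁ y₂ → y₁ ∈ S → y₂ ∈ S) :
    NSet E (insert xbar (univ.filter fun x => ∃ y ∈ S, 0 < W x y)) ⊆ S := by
  intro y hy
  obtain ⟨x, hxD, hxy⟩ := (mem_filter.mp hy).2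
  rcases mem_insert.mp hxD with rfl | hx
  · exact hN y hxy
  · obtain ⟨y₁, hy₁, hpos⟩ := (mem_filter.mp hx).2
    exact hclosed y₁ y ⟨x, hpos, hxy⟩ hy₁

theorem exists_unsaturated_of_hEdge_closed {X : Type*} [Fintype X]
    (E : X → X → Prop) [DecidableRel E] (α β : X → ℕ)
    (hex : ∀ D : Finset X, ∑ x ∈ D, α x ≤ ∑ y ∈ NSet E D, β y)
    (W : X → X → ℕ) (hrow : ∀ x, ∑ y, W x y ≤ α x)
    (xbar : X) (hxbar : ∑ y, W xbar y < α xbar) (S : Finset X)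
    (hN : ∀ y, E xbar y → y ∈ S)
    (hclosed : ∀ y₁ y₂, HEdge E W y₁ y₂ → y₁ ∈ S → y₂ ∈ S) :
    ∃ y ∈ S, ∑ x, W x y < β y := by
  classical
  by_contra! hsat
  set D : Finset X := insert xbar (univ.filter fun x => ∃ y ∈ S, 0 < W x y)
  have hsupp : ∀ x ∉ D, ∀ y ∈ S, W x y = 0 := fun x hx y hy =>
    Nat.eq_zero_of_not_pos fun hpos =>
      hx (mem_insert_of_mem (mem_filter.mpr ⟨mem_univ x, y, hy, hpos⟩))
  have hND : NSet E D ⊆ S := NSet_subset_of_hEdge_closed E W xbar S hN hclosed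
  have := calc ∑ x ∈ D, α x
      _ ≤ ∑ y ∈ NSet E D, β y := hex D
      _ ≤ ∑ y ∈ S, β y := sum_le_sum_of_subset hND
      _ ≤ ∑ y ∈ S, ∑ x, W x y := sum_le_sum hsat
      _ ≤ ∑ x ∈ D, ∑ y, W x y := sum_colSum_le_sum_rowSum_of_support W D S hsupp
      _ < ∑ x ∈ D, α x := sum_lt_sum (fun x _ => hrow x) ⟨xbar, mem_insert_self _ _, hxbar⟩
  exact lt_irrefl _ this

theorem reachable_unsaturated_resource_general {X : Type*} [Fintype X]
    (E : X → X → Prop) [DecidableRel E] (α β : X → ℕ)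
    (hex : ∀ D : Finset X, ∑ x ∈ D, α x ≤ ∑ y ∈ NSet E D, β y)
    (W : X → X → ℕ) (hW : IsPartialAlloc E α β W)
    (xbar : X) (hxbar : ∑ y, W xbar y < α xbar) :
    ∃ ybar : X, E xbar ybar ∧
      ∃ y' : X, Relation.ReflTransGen (HEdge E W) ybar y' ∧
        ∑ x, W x y' < β y' := by
  classical
  let S : Finset X := {y | ∃ ybar, E xbar ybar ∧ Relation.ReflTransGen (HEdge E W) ybar y}
  have hN : ∀ y, E xbar y → y ∈ S := fun y hy => mem_filter.mpr ⟨mem_univ y, y, hy, .refl⟩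
  have hclosed : ∀ y₁ y₂, HEdge E W y₁ y₂ → y₁ ∈ S → y₂ ∈ S := by
    intro y₁ y₂ hedge hy₁
    obtain ⟨ybar, hE, hreach⟩ := (mem_filter.mp hy₁).2
    exact mem_filter.mpr ⟨mem_univ y₂, ybar, hE, hreach.tail hedge⟩
  obtain ⟨y', hy'S, hy'⟩ :=
    exists_unsaturated_of_hEdge_closed E α β hex W hW.2.1 xbar hxbar S hN hclosed
  obtain ⟨ybar, hE, hreach⟩ := (mem_filter.mp hy'S).2
  exact ⟨ybar, hE, y', hreach, hy'⟩

/-- under the existence condition, for every partial allocation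
state `W` and every unit `xbar` not fully allocated there exist `ȳ ∈ N_{xbar}`
and a resource `y'` reachable from `ȳ` in `H_W` with `W_{y'} < β_{y'}`. -/
theorem reachable_unsaturated_resource {X : Type*} [Fintype X] [DecidableEq X]
    (E : X → X → Prop) [DecidableRel E] (α β : X → ℕ)
    (hex : ∀ D : Finset X, ∑ x ∈ D, α x ≤ ∑ y ∈ NSet E D, β y)
    (W : X → X → ℕ) (hW : IsPartialAlloc E α β W)
    (xbar : X) (hxbar : ∑ y, W xbar y < α xbar) :
    ∃ ybar : X, E xbar ybar ∧
      ∃ y' : X, Relation.ReflTransGen (HEdge E W) ybar y' ∧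
        ∑ x, W x y' < β y' :=
  reachable_unsaturated_resource_general E α β hex W hW xbar hxbar
end

section
/- Assume (G, α, β) satisfies the existence condition and let (M_{x̄}(W)) be an admissible family. Then for every partial allocation state W ∈ 𝒲_p there exists a directed path in the transition graph ℒ_p from W to some allocation state W' ∈ 𝒲. -/
open Finset

/-- Row sum `W^x`. -/
def rowSum {X : Type*} [Fintype X] (W : X → X → ℕ) (x : X) : ℕ := ∑ y, W x y

/-- Column sum `W_y`. -/
def colSum {X : Type*} [Fintype X] (W : X → X → ℕ) (y : X) : ℕ := ∑ x, W x y

/-- An admissible family of move sets `M_{x̄}(W)`: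
every `W' ∈ M_{x̄}(W)` is a partial allocation state differing from `W` only in
row `x̄`, with row sum not decreased, and `W' ≠ W`; moreover
(i) a not fully allocated unit can always newly allocate some `n ≥ 1` atoms
into an unsaturated neighboring resource;
(ii) a unit can always move one atom from a used resource to a different
unsaturated neighboring resource;
(iii) on allocation states, moves are reversible. -/
def IsAdmissible {X : Type*} [Fintype X] [DecidableEq X]
    (E : X → X → Prop) (α β : X → ℕ)
    (M : X → (X → X → ℕ) → Finset (X → X → ℕ)) : Prop :=
  (∀ (xbar : X) (W : X → X → ℕ), IsPartialAlloc E α β W → ∀ W' ∈ M xbar W,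
      IsPartialAlloc E α β W' ∧ (∀ x, x ≠ xbar → ∀ y, W' x y = W x y) ∧
      rowSum W xbar ≤ rowSum W' xbar ∧ W' ≠ W) ∧
  (∀ (xbar : X) (W : X → X → ℕ), IsPartialAlloc E α β W →
      rowSum W xbar < α xbar → ∀ y, E xbar y → colSum W y < β y →
      ∃ n : ℕ, 1 ≤ n ∧
        (fun x' y' => W x' y' + if x' = xbar ∧ y' = y then n else 0) ∈ M xbar W) ∧
  (∀ (xbar : X) (W : X → X → ℕ), IsPartialAlloc E α β W →
      ∀ y' y'' : X, y' ≠ y'' → 0 < W xbar y' → E xbar y'' → colSum W y'' < β y'' →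
      (fun x z => if x = xbar ∧ z = y' then W x z - 1
        else if x = xbar ∧ z = y'' then W x z + 1 else W x z) ∈ M xbar W) ∧
  (∀ (xbar : X) (W W' : X → X → ℕ), IsAlloc E α β W → IsAlloc E α β W' →
      (W' ∈ M xbar W ↔ W ∈ M xbar W'))

/-- One step of the transition graph `ℒ_p`: some unit `x̄` moves from `W` to
`W' ∈ M_{x̄}(W)`. -/
def MoveStep {X : Type*} (M : X → (X → X → ℕ) → Finset (X → X → ℕ))
    (W W' : X → X → ℕ) : Prop :=
  ∃ xbar : X, W' ∈ M xbar W

/-!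
Induct on the total deficiency `∑ₓ (αₓ - Wˣ)`. If a unit `x̄` is not fully allocated, apply the
existence condition to `x̄` together with every unit holding atoms of a resource reachable from
`x̄` by an alternating path: its neighbourhood consists of reachable resources, so if they were all
saturated, these units would hold at least `∑ α` atoms, which is impossible since `x̄` is deficient.
Hence some alternating path from `x̄` ends in an unsaturated resource `y`. The last unit on the
path shifts an atom into `y` by a move (ii); this frees room in the previous resource, which is
still reachable by a path no longer than before. Repeating, the free room travels back to a
neighbour of `x̄`, where a move (i) lowers the deficiency.
-/

section Sums

variable {X M : Type*} [Fintype X] [DecidableEq X] [AddCommMonoid M]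

theorem sum_add_eq_sum_add_of_add_ite {f g : X → M} {a b : X} {m n : M}
    (h : ∀ z, f z + (if z = a then m else 0) = g z + (if z = b then n else 0)) :
    ∑ z, f z + m = ∑ z, g z + n := by
  simpa [sum_add_distrib] using congrArg (fun u : X → M => ∑ z, u z) (funext h)

end Sums

section Moves

variable {X : Type*} [DecidableEq X]

def addAtoms (W : X → X → ℕ) (xbar y : X) (n : ℕ) : X → X → ℕ :=
  fun x' y' => W x' y' + if x' = xbar ∧ y' = y then n else 0

def moveAtom (W : X → X → ℕ) (x y' y'' : X) : X → X → ℕ :=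
  fun x' z => if x' = x ∧ z = y' then W x' z - 1
    else if x' = x ∧ z = y'' then W x' z + 1 else W x' z

theorem pos_moveAtom {W : X → X → ℕ} {x y' y'' x' z : X} (hz : z ≠ y') (h : 0 < W x' z) :
    0 < moveAtom W x y' y'' x' z := by
  simp only [moveAtom, hz, and_false, if_false]
  split <;> omega

variable [Fintype X]

def deficiency (α : X → ℕ) (W : X → X → ℕ) : ℕ := ∑ x, (α x - rowSum W x)

theorem rowSum_addAtoms (W : X → X → ℕ) (xbar y : X) (n : ℕ) (x : X) :
    rowSum (addAtoms W xbar y n) x = rowSum W x + if x = xbar then n else 0 := by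
  by_cases hx : x = xbar <;> simp [rowSum, addAtoms, hx, sum_add_distrib]

theorem deficiency_addAtoms_lt {α : X → ℕ} {W : X → X → ℕ} {xbar y : X} {n : ℕ} (hn : 1 ≤ n)
    (hle : rowSum (addAtoms W xbar y n) xbar ≤ α xbar) :
    deficiency α (addAtoms W xbar y n) < deficiency α W := by
  rw [rowSum_addAtoms, if_pos rfl] at hle
  refine sum_lt_sum (fun x _ => ?_) ⟨xbar, mem_univ _, ?_⟩
  · rw [rowSum_addAtoms]
    omega
  · rw [rowSum_addAtoms, if_pos rfl]
    omega

theorem rowSum_moveAtom {W : X → X → ℕ} {x y' y'' : X} (hne : y' ≠ y'') (hpos : 0 < W x y')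
    (x₀ : X) : rowSum (moveAtom W x y' y'') x₀ = rowSum W x₀ := by
  by_cases hx : x₀ = x
  · subst hx
    have key := sum_add_eq_sum_add_of_add_ite (f := moveAtom W x₀ y' y'' x₀) (g := W x₀)
      (a := y') (b := y'') (m := 1) (n := 1) fun z => by
        by_cases hz : z = y' <;> by_cases hz' : z = y'' <;>
          simp [moveAtom, hz, hz', hne, hne.symm] <;> omega
    exact Nat.add_right_cancel key
  · simp [rowSum, moveAtom, hx]

theorem deficiency_moveAtom {α : X → ℕ} {W : X → X → ℕ} {x y' y'' : X} (hne : y' ≠ y'')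
    (hpos : 0 < W x y') : deficiency α (moveAtom W x y' y'') = deficiency α W := by
  simp only [deficiency, rowSum_moveAtom hne hpos]

theorem colSum_moveAtom_add_one {W : X → X → ℕ} {x y' : X} (y'' : X) (hpos : 0 < W x y') :
    colSum (moveAtom W x y' y'') y' + 1 = colSum W y' := by
  simpa [colSum] using sum_add_eq_sum_add_of_add_ite (f := fun x' => moveAtom W x y' y'' x' y')
    (g := fun x' => W x' y') (a := x) (b := x) (m := 1) (n := 0) fun x' => by
      by_cases hx : x' = x
      · simp [moveAtom, hx]
        omega
      · simp [moveAtom, hx]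

end Moves

section AltReach

variable {X : Type*}

/-- `AltReach E W x̄ y k`: there is an alternating path `x̄ → y₁ ← x₁ → ⋯ → yₖ ← xₖ → y`
in which each `xᵢ` holds an atom of `yᵢ` under `W`. -/
inductive AltReach (E : X → X → Prop) (W : X → X → ℕ) (xbar : X) : X → ℕ → Prop
  | base {y : X} : E xbar y → AltReach E W xbar y 0
  | step {y₀ y x : X} {k : ℕ} : AltReach E W xbar y₀ k → 0 < W x y₀ → E x y →
      AltReach E W xbar y (k + 1)

/-- A path that avoids the column `y₀` survives any change of `W` keeping its atoms off `y₀`;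
a path through `y₀` is cut there. -/
theorem AltReach.transfer {E : X → X → Prop} {W W₁ : X → X → ℕ} {xbar y₀ y : X} {k : ℕ}
    (h : ∀ x z, z ≠ y₀ → 0 < W x z → 0 < W₁ x z) (hr : AltReach E W xbar y k) :
    (∃ k' ≤ k, AltReach E W₁ xbar y₀ k') ∨ ∃ k' ≤ k, AltReach E W₁ xbar y k' := by
  induction hr with
  | base hE => exact Or.inr ⟨0, le_rfl, .base hE⟩
  | @step y₁ y x k _ hpos hE ih =>
    rcases ih with ⟨k', hk', hr'⟩ | ⟨k', hk', hr'⟩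
    · exact Or.inl ⟨k', by omega, hr'⟩
    · by_cases hy : y₁ = y₀
      · subst hy
        exact Or.inl ⟨k', by omega, hr'⟩
      · exact Or.inr ⟨k' + 1, by omega, .step hr' (h x y₁ hy hpos) hE⟩

theorem exists_altReach_colSum_lt [Fintype X] {E : X → X → Prop} [DecidableRel E]
    {α β : X → ℕ} (hex : ∀ D : Finset X, ∑ x ∈ D, α x ≤ ∑ y ∈ NSet E D, β y)
    {W : X → X → ℕ} (hrow : ∀ x, rowSum W x ≤ α x) {xbar : X} (hdef : rowSum W xbar < α xbar) :
    ∃ y k, AltReach E W xbar y k ∧ colSum W y < β y := by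
  classical
  by_contra! hsat
  set D : Finset X := univ.filter fun x => x = xbar ∨ ∃ y k, AltReach E W xbar y k ∧ 0 < W x y
  have hreach : ∀ y ∈ NSet E D, ∃ k, AltReach E W xbar y k := by
    intro y hy
    obtain ⟨x, hxD, hE⟩ := (mem_filter.1 hy).2
    rcases (mem_filter.1 hxD).2 with rfl | ⟨y', k, hr, hpos⟩
    · exact ⟨0, .base hE⟩
    · exact ⟨k + 1, .step hr hpos hE⟩
  have hcol : ∀ y ∈ NSet E D, colSum W y = ∑ x ∈ D, W x y := fun y hy =>
    (sum_subset (subset_univ D) fun x _ hx => by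
      by_contra hpos
      obtain ⟨k, hr⟩ := hreach y hy
      exact hx (mem_filter.2 ⟨mem_univ x, .inr ⟨y, k, hr, Nat.pos_of_ne_zero hpos⟩⟩)).symm
  have : ∑ x ∈ D, α x < ∑ x ∈ D, α x := calc
    ∑ x ∈ D, α x ≤ ∑ y ∈ NSet E D, β y := hex D
    _ ≤ ∑ y ∈ NSet E D, colSum W y := sum_le_sum fun y hy =>
      (hreach y hy).elim fun k hr => hsat y k hr
    _ = ∑ x ∈ D, ∑ y ∈ NSet E D, W x y := by rw [sum_congr rfl hcol, sum_comm]
    _ ≤ ∑ x ∈ D, rowSum W x := sum_le_sum fun x _ => sum_le_sum_of_subset (subset_univ _)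
    _ < ∑ x ∈ D, α x := sum_lt_sum (fun x _ => hrow x) ⟨xbar, by simp [D], hdef⟩
  exact lt_irrefl _ this

end AltReach

section Augment

variable {X : Type*} [Fintype X] [DecidableEq X] {E : X → X → Prop} {α β : X → ℕ}
  {M : X → (X → X → ℕ) → Finset (X → X → ℕ)}

theorem exists_step_deficiency_lt (hM : IsAdmissible E α β M) {W : X → X → ℕ}
    (hW : IsPartialAlloc E α β W) {xbar y : X} (hdef : rowSum W xbar < α xbar)
    (hE : E xbar y) (hy : colSum W y < β y) :
    ∃ W', Relation.ReflTransGen (MoveStep M) W W' ∧ IsPartialAlloc E α β W' ∧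
      deficiency α W' < deficiency α W := by
  obtain ⟨n, hn, hmem⟩ := hM.2.1 xbar W hW hdef y hE hy
  have hmem : addAtoms W xbar y n ∈ M xbar W := hmem
  have hW' := (hM.1 xbar W hW _ hmem).1
  exact ⟨_, .single ⟨xbar, hmem⟩, hW', deficiency_addAtoms_lt hn (hW'.2.1 xbar)⟩

theorem exists_path_deficiency_lt_of_altReach (hM : IsAdmissible E α β M) {xbar : X} (k : ℕ) :
    ∀ {W y}, IsPartialAlloc E α β W → rowSum W xbar < α xbar → AltReach E W xbar y k →
      colSum W y < β y →
      ∃ W', Relation.ReflTransGen (MoveStep M) W W' ∧ IsPartialAlloc E α β W' ∧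
        deficiency α W' < deficiency α W := by
  induction k using Nat.strong_induction_on with
  | _ k ih =>
  intro W y hW hdef hr hy
  cases hr with
  | base hE => exact exists_step_deficiency_lt hM hW hdef hE hy
  | @step y₀ _ x k₀ hr₀ hpos hE =>
    obtain rfl | hne := eq_or_ne y₀ y
    · exact ih k₀ (by omega) hW hdef hr₀ hy
    have hmem : moveAtom W x y₀ y ∈ M x W := hM.2.2.1 x W hW y₀ y hne hpos hE hy
    obtain ⟨k', hk', hr₁⟩ : ∃ k' ≤ k₀, AltReach E (moveAtom W x y₀ y) xbar y₀ k' :=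
      (hr₀.transfer fun _ _ hz h => pos_moveAtom hz h).elim id id
    have hy₀ : colSum (moveAtom W x y₀ y) y₀ < β y₀ := by
      have hcol := colSum_moveAtom_add_one y hpos
      have hbound : colSum W y₀ ≤ β y₀ := hW.2.2 y₀
      omega
    obtain ⟨W', hpath, hW', hlt⟩ := ih k' (by omega) (hM.1 x W hW _ hmem).1
      (by rwa [rowSum_moveAtom hne hpos]) hr₁ hy₀
    exact ⟨W', .head ⟨x, hmem⟩ hpath, hW', by rwa [deficiency_moveAtom hne hpos] at hlt⟩

theorem exists_path_deficiency_lt [DecidableRel E]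
    (hex : ∀ D : Finset X, ∑ x ∈ D, α x ≤ ∑ y ∈ NSet E D, β y) (hM : IsAdmissible E α β M)
    {W : X → X → ℕ} (hW : IsPartialAlloc E α β W) (hnot : ¬ IsAlloc E α β W) :
    ∃ W', Relation.ReflTransGen (MoveStep M) W W' ∧ IsPartialAlloc E α β W' ∧
      deficiency α W' < deficiency α W := by
  obtain ⟨xbar, hdef⟩ : ∃ x, rowSum W x < α x := by
    by_contra! h
    exact hnot ⟨hW, fun x => le_antisymm (hW.2.1 x) (h x)⟩
  obtain ⟨y, k, hr, hy⟩ := exists_altReach_colSum_lt hex hW.2.1 hdef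
  exact exists_path_deficiency_lt_of_altReach hM k hW hdef hr hy

end Augment

/-- under the existence condition, for any admissible family,
from every partial allocation state there is a path in `ℒ_p` to some
allocation state. -/
theorem path_to_allocation {X : Type*} [Fintype X] [DecidableEq X]
    (E : X → X → Prop) [DecidableRel E] (α β : X → ℕ)
    (hex : ∀ D : Finset X, ∑ x ∈ D, α x ≤ ∑ y ∈ NSet E D, β y)
    (M : X → (X → X → ℕ) → Finset (X → X → ℕ))
    (hM : IsAdmissible E α β M)
    (W : X → X → ℕ) (hW : IsPartialAlloc E α β W) :
    ∃ W' : X → X → ℕ, IsAlloc E α β W' ∧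
      Relation.ReflTransGen (MoveStep M) W W' := by
  induction h : deficiency α W using Nat.strong_induction_on generalizing W with
  | _ n ih =>
  by_cases hA : IsAlloc E α β W
  · exact ⟨W, hA, .refl⟩
  obtain ⟨W₁, hpath, hW₁, hlt⟩ := exists_path_deficiency_lt hex hM hW hA
  obtain ⟨W', hW', hpath'⟩ := ih _ (h ▸ hlt) W₁ hW₁ rfl
  exact ⟨W', hW', hpath.trans hpath'⟩
end

section
/- Suppose (G, α, β) satisfies the strict existence condition and let W ∈ 𝒲 be an allocation state. Then for every resource ȳ ∈ X with β_{ȳ} ≥ 1 there exist an integer t ≥ 0, pairwise distinct resources y_0, y_1, …, y_t ∈ X with y_0 = ȳ, and pairwise distinct units x_0, …, x_{t−1} ∈ X such that: for every k = 0, …, t−1 one has W_{x_k y_k} > 0 and (x_k, y_{k+1}) ∈ E (i.e. y_k →_{x_k} y_{k+1} in H_W); W_{y_k} = β_{y_k} for every k = 0, …, t−1; and W_{y_t} < β_{y_t}. -/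
open Finset

/-!
Let `R` be the set of resources reachable from `ȳ` in `H_W`. If every resource in `R` were
saturated, let `D` be the set of units with a positive allocation into `R`. Since `R` is closed
under the edges of `H_W` we get `N(D) ⊆ R`, hence
`∑_{N(D)} β ≤ ∑_R β = ∑_{y ∈ R} ∑_{x ∈ D} W_{xy} ≤ ∑_D α`, and `D ≠ ∅` because `β_{ȳ} ≥ 1`;
this contradicts the strict existence condition. So some unsaturated resource is reachable, and
a shortest walk from `ȳ` to an unsaturated resource has the required shape: a repeated resource
or a repeated unit `x_i = x_j` (`i < j`) yields the shortcut `y_i →_{x_j} y_{j+1}`, since an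
edge `y →_x y'` of `H_W` only depends on `x` through the separate conditions on `y` and `y'`.
-/

section LabelledWalk

variable {α ι : Type*} {S T : ι → α → Prop}

/-- `ys 0 →_{xs 0} ys 1 → ⋯ →_{xs (t-1)} ys t`, where an edge `a →_i b` means `S i a ∧ T i b`;
for `H_W` take `S x y := 0 < W x y` and `T := E`. -/
def IsLabelledWalk (S T : ι → α → Prop) (ys : ℕ → α) (xs : ℕ → ι) (t : ℕ) : Prop :=
  ∀ k < t, S (xs k) (ys k) ∧ T (xs k) (ys (k + 1))

theorem IsLabelledWalk.mono {ys : ℕ → α} {xs : ℕ → ι} {t s : ℕ}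
    (h : IsLabelledWalk S T ys xs t) (hst : s ≤ t) : IsLabelledWalk S T ys xs s :=
  fun k hk => h k (by omega)

theorem IsLabelledWalk.snoc {ys : ℕ → α} {xs : ℕ → ι} {t : ℕ}
    (h : IsLabelledWalk S T ys xs t) {i : ι} {b : α} (hS : S i (ys t)) (hT : T i b) :
    IsLabelledWalk S T (Function.update ys (t + 1) b) (Function.update xs t i) (t + 1) := by
  intro k hk
  rcases Nat.lt_succ_iff_lt_or_eq.1 hk with hk | rfl
  · simpa [Function.update_of_ne (show k ≠ t + 1 by omega),
      Function.update_of_ne (show k + 1 ≠ t + 1 by omega),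
      Function.update_of_ne (show k ≠ t by omega)] using h k hk
  · simpa using ⟨hS, hT⟩

theorem IsLabelledWalk.exists_shortcut {ys : ℕ → α} {xs : ℕ → ι} {t : ℕ}
    (h : IsLabelledWalk S T ys xs t) {i j : ℕ} (hij : i < j) (hjt : j < t)
    (hS : S (xs j) (ys i)) :
    ∃ ys' xs', IsLabelledWalk S T ys' xs' (t - (j - i)) ∧ ys' 0 = ys 0 ∧
      ys' (t - (j - i)) = ys t := by
  refine ⟨fun k => if k ≤ i then ys k else ys (k + (j - i)),
    fun k => if k < i then xs k else xs (k + (j - i)), ?_, by simp, ?_⟩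
  · intro k hk
    rcases lt_trichotomy k i with hki | rfl | hki
    · simpa [hki, hki.le, Nat.succ_le_of_lt hki] using h k (by omega)
    · simpa [show k + (j - k) = j by omega, show k + 1 + (j - k) = j + 1 by omega] using ⟨hS, (h j hjt).2⟩
    · simpa [hki.not_ge, show ¬k + 1 ≤ i by omega, show ¬k < i by omega,
        show k + 1 + (j - i) = k + (j - i) + 1 by omega] using h (k + (j - i)) (by omega)
  · simp [show ¬t - (j - i) ≤ i by omega, show t - (j - i) + (j - i) = t by omega]

theorem exists_injective_labelledWalk (P : α → Prop) {a : α}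
    (h : ∃ t ys xs, IsLabelledWalk S T ys xs t ∧ ys 0 = a ∧ P (ys t)) :
    ∃ t ys xs, IsLabelledWalk S T ys xs t ∧ ys 0 = a ∧ P (ys t) ∧ (∀ k < t, ¬P (ys k)) ∧
      (∀ i j, i < j → j ≤ t → ys i ≠ ys j) ∧ (∀ i j, i < j → j < t → xs i ≠ xs j) := by
  classical
  obtain ⟨ys, xs, hwalk, h0, hP⟩ := Nat.find_spec h
  set t := Nat.find h
  have avoid (k : ℕ) (hk : k < t) : ¬P (ys k) := fun hPk =>
    Nat.find_min h hk ⟨ys, xs, hwalk.mono hk.le, h0, hPk⟩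
  have no_shortcut (i j : ℕ) (hij : i < j) (hjt : j < t) : ¬S (xs j) (ys i) := fun hS => by
    obtain ⟨ys', xs', hwalk', h0', hend⟩ := hwalk.exists_shortcut hij hjt hS
    exact Nat.find_min h (show t - (j - i) < t by omega) ⟨ys', xs', hwalk', h0'.trans h0, hend ▸ hP⟩
  refine ⟨t, ys, xs, hwalk, h0, hP, avoid, ?_, ?_⟩
  · intro i j hij hjt hys
    rcases hjt.lt_or_eq with hjt | rfl
    · exact no_shortcut i j hij hjt (hys ▸ (hwalk j hjt).1)
    · exact avoid i hij (hys ▸ hP)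
  · intro i j hij hjt hxs
    exact no_shortcut i j hij hjt (hxs ▸ (hwalk i (hij.trans hjt)).1)

end LabelledWalk

section Allocation

variable {X : Type*} [Fintype X] {E : X → X → Prop} [DecidableRel E] {α β : X → ℕ}
  {W : X → X → ℕ}

def feeders (W : X → X → ℕ) (R : Finset X) : Finset X :=
  univ.filter fun x => ∃ y ∈ R, 0 < W x y

theorem sum_nset_feeders_le (hrow : ∀ x, ∑ y, W x y ≤ α x) {R : Finset X}
    (hclosed : ∀ y ∈ R, ∀ x y', 0 < W x y → E x y' → y' ∈ R)
    (hsat : ∀ y ∈ R, β y ≤ ∑ x, W x y) :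
    ∑ y ∈ NSet E (feeders W R), β y ≤ ∑ x ∈ feeders W R, α x := by
  set D := feeders W R
  have hND : NSet E D ⊆ R := by
    intro y' hy'
    obtain ⟨x, hxD, hxy'⟩ := (mem_filter.1 hy').2
    obtain ⟨y, hyR, hxy⟩ := (mem_filter.1 hxD).2
    exact hclosed y hyR x y' hxy hxy'
  have hcol (y : X) (hy : y ∈ R) : ∑ x, W x y = ∑ x ∈ D, W x y := by
    refine (sum_subset (subset_univ D) fun x _ hx => ?_).symm
    by_contra hpos
    exact hx (mem_filter.2 ⟨mem_univ x, y, hy, Nat.pos_of_ne_zero hpos⟩)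
  calc ∑ y ∈ NSet E D, β y
      ≤ ∑ y ∈ R, β y := sum_le_sum_of_subset hND
    _ ≤ ∑ y ∈ R, ∑ x ∈ D, W x y := sum_le_sum fun y hy => (hsat y hy).trans (hcol y hy).le
    _ = ∑ x ∈ D, ∑ y ∈ R, W x y := sum_comm
    _ ≤ ∑ x ∈ D, ∑ y, W x y := sum_le_sum fun x _ => sum_le_sum_of_subset (subset_univ R)
    _ ≤ ∑ x ∈ D, α x := sum_le_sum fun x _ => hrow x

theorem exists_labelledWalk_to_unsaturated
    (hstrict : ∀ D : Finset X, D.Nonempty → ∑ x ∈ D, α x < ∑ y ∈ NSet E D, β y)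
    (hrow : ∀ x, ∑ y, W x y ≤ α x) {ybar : X} (hybar : 1 ≤ β ybar) :
    ∃ t ys xs, IsLabelledWalk (fun x y => 0 < W x y) E ys xs t ∧ ys 0 = ybar ∧
      ∑ x, W x (ys t) < β (ys t) := by
  classical
  by_contra! hnone
  set R := univ.filter fun y => ∃ t ys xs,
    IsLabelledWalk (fun x y => 0 < W x y) E ys xs t ∧ ys 0 = ybar ∧ ys t = y
  have hclosed : ∀ y ∈ R, ∀ x y', 0 < W x y → E x y' → y' ∈ R := by
    intro y hy x y' hxy hxy'
    obtain ⟨t, ys, xs, hwalk, h0, rfl⟩ := (mem_filter.1 hy).2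
    exact mem_filter.2 ⟨mem_univ _, t + 1, _, _, hwalk.snoc hxy hxy',
      by simp [Function.update_of_ne, h0], by simp⟩
  have hsat : ∀ y ∈ R, β y ≤ ∑ x, W x y := by
    intro y hy
    obtain ⟨t, ys, xs, hwalk, h0, rfl⟩ := (mem_filter.1 hy).2
    exact hnone t ys xs hwalk h0
  have hybarR : ybar ∈ R :=
    mem_filter.2 ⟨mem_univ _, 0, fun _ => ybar, fun _ => ybar, fun _ h => absurd h (by omega),
      rfl, rfl⟩
  have hfeeders : (feeders W R).Nonempty := by
    obtain ⟨x, -, hx⟩ := exists_ne_zero_of_sum_ne_zero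
      (show ∑ x, W x ybar ≠ 0 by have := hsat ybar hybarR; omega)
    exact ⟨x, mem_filter.2 ⟨mem_univ x, ybar, hybarR, Nat.pos_of_ne_zero hx⟩⟩
  exact (hstrict _ hfeeders).not_ge (sum_nset_feeders_le hrow hclosed hsat)

end Allocation

theorem augmenting_sequence_exists_strict_general {X : Type*} [Fintype X]
    (E : X → X → Prop) [DecidableRel E] (α β : X → ℕ)
    (hstrict : ∀ D : Finset X, D.Nonempty →
      ∑ x ∈ D, α x < ∑ y ∈ NSet E D, β y)
    (W : X → X → ℕ) (hW : IsAlloc E α β W)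
    (ybar : X) (hybar : 1 ≤ β ybar) :
    ∃ (t : ℕ) (ys : Fin (t + 1) → X) (xs : Fin t → X),
      Function.Injective ys ∧ Function.Injective xs ∧ ys 0 = ybar ∧
      (∀ k : Fin t, 0 < W (xs k) (ys k.castSucc) ∧ E (xs k) (ys k.succ)) ∧
      (∀ k : Fin t, ∑ x, W x (ys k.castSucc) = β (ys k.castSucc)) ∧
      ∑ x, W x (ys (Fin.last t)) < β (ys (Fin.last t)) := by
  obtain ⟨⟨-, hrow, hcol⟩, -⟩ := hW
  obtain ⟨t, ys, xs, hwalk, h0, hlast, hsat, hys, hxs⟩ :=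
    exists_injective_labelledWalk (fun y => ∑ x, W x y < β y)
      (exists_labelledWalk_to_unsaturated hstrict hrow hybar)
  refine ⟨t, fun k => ys k, fun k => xs k,
    Function.injective_iff_pairwise_ne.2 <| pairwise_iff_lt.2 fun i j hij => hys i j hij (by omega),
    Function.injective_iff_pairwise_ne.2 <| pairwise_iff_lt.2 fun i j hij => hxs i j hij j.2,
    h0, fun k => ?_, fun k => (hcol _).antisymm (not_lt.1 (hsat k k.2)), hlast⟩
  simpa using hwalk k k.2

/-- under the strict existence condition, for every allocation
state `W` and every resource `ȳ` with `β_{ȳ} ≥ 1` there is a sequence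
`ȳ = y_0 →_{x_0} y_1 →_{x_1} ⋯ →_{x_{t-1}} y_t` in `H_W` with pairwise
distinct `y_k`'s and pairwise distinct `x_k`'s, all of `y_0, …, y_{t-1}`
saturated and `y_t` not saturated. -/
theorem augmenting_sequence_exists_strict {X : Type*} [Fintype X] [DecidableEq X]
    (E : X → X → Prop) [DecidableRel E] (α β : X → ℕ)
    (hstrict : ∀ D : Finset X, D.Nonempty →
      ∑ x ∈ D, α x < ∑ y ∈ NSet E D, β y)
    (W : X → X → ℕ) (hW : IsAlloc E α β W)
    (ybar : X) (hybar : 1 ≤ β ybar) :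
    ∃ (t : ℕ) (ys : Fin (t + 1) → X) (xs : Fin t → X),
      Function.Injective ys ∧ Function.Injective xs ∧ ys 0 = ybar ∧
      (∀ k : Fin t, 0 < W (xs k) (ys k.castSucc) ∧ E (xs k) (ys k.succ)) ∧
      (∀ k : Fin t, ∑ x, W x (ys k.castSucc) = β (ys k.castSucc)) ∧
      ∑ x, W x (ys (Fin.last t)) < β (ys (Fin.last t)) :=
  augmenting_sequence_exists_strict_general E α β hstrict W hW ybar hybar
end

section
/- Let (M_{x̄}(W)) be an admissible family and let {W¹, W²} be a minimal pair of allocation states. If y ∈ X is such that W¹_y < β_y (i.e. Σ_x W¹_{xy} < β_y), then W¹_{xy} = W²_{xy} for all x ∈ X. -/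
open Finset

/-- The distance `δ(W¹, W²) = Σ_{x,y} |W¹_{xy} − W²_{xy}|`. -/
def allocDist {X : Type*} [Fintype X] (W1 W2 : X → X → ℕ) : ℕ :=
  ∑ x, ∑ y, Nat.dist (W1 x y) (W2 x y)

/-!
If `W²` put more of column `y` on some unit `x` than `W¹` does, then, since both rows of `x`
sum to `α x`, `W¹` puts more than `W²` on some other resource `y'` of `x`. Because `y` is
unsaturated under `W¹`, admissibility lets `x` shift one atom of `W¹` from `y'` to `y`, which
brings `W¹` strictly closer to `W²` and contradicts minimality. Hence column `y` of `W²` is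
dominated by that of `W¹`; in particular `y` is unsaturated under `W²` as well, and the same
argument with the roles exchanged gives the reverse inequality.
-/

section

variable {X : Type*} [Fintype X]

lemma exists_lt_of_sum_eq_of_lt {f g : X → ℕ} (hsum : ∑ i, f i = ∑ i, g i) {i : X}
    (hi : f i < g i) : ∃ j, g j < f j := by
  by_contra! hle
  exact (sum_lt_sum (fun j _ => hle j) ⟨i, mem_univ i, hi⟩).ne hsum

lemma allocDist_comm (V W : X → X → ℕ) : allocDist V W = allocDist W V := by
  simp only [allocDist, Nat.dist_comm]

variable [DecidableEq X]

def shiftAtom (W : X → X → ℕ) (x y' y : X) : X → X → ℕ :=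
  fun a b => if a = x ∧ b = y' then W a b - 1 else if a = x ∧ b = y then W a b + 1 else W a b

lemma allocDist_shiftAtom_lt {A B : X → X → ℕ} {x y' y : X} (hy' : B x y' < A x y')
    (hy : A x y < B x y) : allocDist (shiftAtom A x y' y) B < allocDist A B := by
  have hne : y' ≠ y := by rintro rfl; omega
  have hle : ∀ a b, Nat.dist (shiftAtom A x y' y a b) (B a b) ≤ Nat.dist (A a b) (B a b) := by
    intro a b
    simp only [shiftAtom, Nat.dist]
    split_ifs with h₁ h₂
    · obtain ⟨rfl, rfl⟩ := h₁; omega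
    · obtain ⟨rfl, rfl⟩ := h₂; omega
    · exact le_rfl
  have hlt : Nat.dist (shiftAtom A x y' y x y) (B x y) < Nat.dist (A x y) (B x y) := by
    simp only [shiftAtom, Nat.dist, hne.symm, and_false, and_self, if_false, if_true]
    omega
  simp only [allocDist, ← Fintype.sum_prod_type']
  exact sum_lt_sum (fun p _ => hle p.1 p.2) ⟨(x, y), mem_univ _, hlt⟩

lemma col_le_of_minimal {E : X → X → Prop} {α β : X → ℕ}
    {M : X → (X → X → ℕ) → Finset (X → X → ℕ)} (hM : IsAdmissible E α β M)
    {A B : X → X → ℕ} (hA : IsAlloc E α β A) (hB : IsAlloc E α β B)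
    (hmin : ∀ A', MoveStep M A A' → allocDist A B ≤ allocDist A' B)
    {y : X} (hy : colSum A y < β y) (x : X) : B x y ≤ A x y := by
  by_contra! hlt
  have hE : E x y := by
    by_contra hE
    have := hB.1.1 x y hE
    omega
  obtain ⟨y', hy'⟩ := exists_lt_of_sum_eq_of_lt (by rw [hA.2 x, hB.2 x]) hlt
  have hne : y' ≠ y := by rintro rfl; omega
  have hmove : shiftAtom A x y' y ∈ M x A := hM.2.2.1 x A hA.1 y' y hne (by omega) hE hy
  exact (hmin _ ⟨x, hmove⟩).not_gt (allocDist_shiftAtom_lt hy' hlt)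

end

/-- if `{W¹, W²}` is a minimal pair of allocation states (no pair
of states reachable from them in `ℒ` is strictly closer) and the resource `y`
is unsaturated under `W¹`, then the columns of `W¹` and `W²` at `y` agree. -/
theorem minimal_pair_column_eq {X : Type*} [Fintype X] [DecidableEq X]
    (E : X → X → Prop) (α β : X → ℕ)
    (M : X → (X → X → ℕ) → Finset (X → X → ℕ))
    (hM : IsAdmissible E α β M)
    (W1 W2 : X → X → ℕ) (h1 : IsAlloc E α β W1) (h2 : IsAlloc E α β W2)
    (hmin : ∀ W1' W2' : X → X → ℕ,
      Relation.ReflTransGen (MoveStep M) W1 W1' →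
      Relation.ReflTransGen (MoveStep M) W2 W2' →
      allocDist W1 W2 ≤ allocDist W1' W2')
    (y : X) (hy : colSum W1 y < β y) :
    ∀ x : X, W1 x y = W2 x y := by
  have hle : ∀ x, W2 x y ≤ W1 x y :=
    col_le_of_minimal hM h1 h2 (fun _ h => hmin _ _ (.single h) .refl) hy
  have hy2 : colSum W2 y < β y := (sum_le_sum fun x _ => hle x).trans_lt hy
  have hge : ∀ x, W1 x y ≤ W2 x y := by
    refine col_le_of_minimal hM h2 h1 (fun _ h => ?_) hy2
    rw [allocDist_comm, allocDist_comm _ W1]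
    exact hmin _ _ .refl (.single h)
  exact fun x => (hge x).antisymm (hle x)
end

section
/- If (G, α, β) satisfies the strict existence condition and (M_{x̄}(W)) is an admissible family, then the graph ℒ on the set 𝒲 of allocation states is connected: any two allocation states are joined by a path in ℒ. -/
open Finset

/-!
Rule (ii) moves alone already connect the allocation states, and between allocation states they
can be undone. We induct on the overlap `∑ min (W p q) (W' p q)` of two allocation states, which
reaches `∑ α` only when they coincide, so it suffices to move both states to a pair of larger
overlap. If a resource `y` is unsaturated in `W` and `W p y < W' p y`, unit `p` moves an atom into
`y` from a resource where it holds more than in `W'`. Otherwise both states have the same column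
sums, and the strict existence condition, applied to the units loading the resources that cannot
be drained, yields a resource `c` that one chain of moves drains in both states at once, next to a
unit `x` with `W' x y < W x y` (or a drainable resource on which the states differ); after draining,
`x` moves from `y` into `c` and the first case applies.
-/

section Basic

variable {X : Type*} [Fintype X] {E : X → X → Prop} {α β : X → ℕ}

lemma IsPartialAlloc.edge {W : X → X → ℕ} (hW : IsPartialAlloc E α β W) {x y : X}
    (h : 0 < W x y) : E x y :=
  of_not_not fun hE => h.ne' (hW.1 x y hE)

lemma exists_colSum_lt_of_closed [DecidableRel E]
    (hstrict : ∀ D : Finset X, D.Nonempty → ∑ x ∈ D, α x < ∑ y ∈ NSet E D, β y)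
    {W : X → X → ℕ} (hW : IsPartialAlloc E α β W) (C : Finset X)
    (hC : ∀ y ∈ C, ∀ x, 0 < W x y → ∀ y', E x y' → y' ∈ C) (hload : ∃ y ∈ C, 0 < colSum W y) :
    ∃ y ∈ C, colSum W y < β y := by
  set U := univ.filter fun x => ∃ y ∈ C, 0 < W x y
  have hU : U.Nonempty := by
    obtain ⟨y, hy, hpos⟩ := hload
    obtain ⟨x, -, hx⟩ := exists_lt_of_sum_lt (show ∑ _x : X, 0 < colSum W y by simpa using hpos)
    exact ⟨x, mem_filter.2 ⟨mem_univ _, y, hy, hx⟩⟩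
  have hN : NSet E U ⊆ C := by
    intro y' hy'
    obtain ⟨x, hxU, hE⟩ := (mem_filter.1 hy').2
    obtain ⟨y, hy, hx⟩ := (mem_filter.1 hxU).2
    exact hC y hy x hx y' hE
  have hvanish : ∀ y ∈ C, ∀ x ∉ U, W x y = 0 := fun y hy x hx =>
    Nat.eq_zero_of_not_pos fun h => hx (mem_filter.2 ⟨mem_univ _, y, hy, h⟩)
  by_contra! hsat
  have hcount : ∑ y ∈ C, β y ≤ ∑ x ∈ U, α x := calc
    ∑ y ∈ C, β y ≤ ∑ y ∈ C, colSum W y := sum_le_sum hsat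
    _ = ∑ y ∈ C, ∑ x ∈ U, W x y := sum_congr rfl fun y hy =>
        (sum_subset (subset_univ U) fun x _ hx => hvanish y hy x hx).symm
    _ = ∑ x ∈ U, ∑ y ∈ C, W x y := sum_comm
    _ ≤ ∑ x ∈ U, α x := sum_le_sum fun x _ =>
        (sum_le_sum_of_subset (subset_univ C)).trans (hW.2.1 x)
  have := sum_le_sum_of_subset (f := β) hN
  have := hstrict U hU
  omega

def overlap (W W' : X → X → ℕ) : ℕ := ∑ p, ∑ q, min (W p q) (W' p q)

lemma overlap_comm (W W' : X → X → ℕ) : overlap W W' = overlap W' W := by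
  simp only [overlap, min_comm]

lemma overlap_le_sum {W : X → X → ℕ} (hW : IsAlloc E α β W) (W' : X → X → ℕ) :
    overlap W W' ≤ ∑ x, α x :=
  calc overlap W W' ≤ ∑ p, ∑ q, W p q :=
        sum_le_sum fun _ _ => sum_le_sum fun _ _ => min_le_left _ _
    _ = ∑ x, α x := sum_congr rfl fun p _ => hW.2 p

end Basic

section Transfer

variable {X : Type*} [DecidableEq X]

/-- The move `W + e_{xb} - e_{xa}` of rule (ii). -/
def transfer (W : X → X → ℕ) (x a b : X) : X → X → ℕ :=
  fun p q => if p = x ∧ q = a then W p q - 1 else if p = x ∧ q = b then W p q + 1 else W p q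

lemma transfer_add_ite {W : X → X → ℕ} {x a b : X} (hab : a ≠ b) (ha : 0 < W x a) (p q : X) :
    transfer W x a b p q + (if p = x ∧ q = a then 1 else 0) =
      W p q + (if p = x ∧ q = b then 1 else 0) := by
  unfold transfer
  grind

lemma transfer_transfer {W : X → X → ℕ} {x a b : X} (hab : a ≠ b) (ha : 0 < W x a) :
    transfer (transfer W x a b) x b a = W := by
  funext p q
  unfold transfer
  grind

lemma min_le_min_transfer {W W' : X → X → ℕ} {x a b : X} (hab : a ≠ b) (ha : W' x a < W x a)
    (p q : X) : min (W p q) (W' p q) ≤ min (transfer W x a b p q) (W' p q) := by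
  have h := transfer_add_ite hab (Nat.zero_lt_of_lt ha) p q
  by_cases h1 : p = x ∧ q = a
  · obtain ⟨rfl, rfl⟩ := h1
    simp only [and_self, if_true, hab, and_false, if_false] at h
    omega
  · rw [if_neg h1] at h
    split_ifs at h <;> omega

variable [Fintype X]

lemma rowSum_transfer {W : X → X → ℕ} {x a b : X} (hab : a ≠ b) (ha : 0 < W x a) (p : X) :
    rowSum (transfer W x a b) p = rowSum W p := by
  have h := sum_congr rfl fun q (_ : q ∈ univ) => transfer_add_ite hab ha p q
  simp only [sum_add_distrib, ite_and, sum_ite_irrel, sum_ite_eq', mem_univ, if_true,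
    sum_const_zero] at h
  exact Nat.add_right_cancel h

lemma colSum_transfer {W : X → X → ℕ} {x a b : X} (hab : a ≠ b) (ha : 0 < W x a) (q : X) :
    colSum (transfer W x a b) q + (if q = a then 1 else 0) =
      colSum W q + (if q = b then 1 else 0) := by
  have h := sum_congr rfl fun p (_ : p ∈ univ) => transfer_add_ite hab ha p q
  simp only [sum_add_distrib, ite_and, sum_ite_eq', mem_univ, if_true] at h
  exact h

lemma colSum_transfer_self {W : X → X → ℕ} {x a b : X} (hab : a ≠ b) (ha : 0 < W x a) :
    colSum (transfer W x a b) a + 1 = colSum W a := by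
  simpa [hab] using colSum_transfer hab ha a

lemma overlap_le_transfer {W W' : X → X → ℕ} {x a b : X} (hab : a ≠ b) (ha : W' x a < W x a) :
    overlap W W' ≤ overlap (transfer W x a b) W' :=
  sum_le_sum fun p _ => sum_le_sum fun q _ => min_le_min_transfer hab ha p q

lemma overlap_lt_transfer {W W' : X → X → ℕ} {x a b : X} (hab : a ≠ b) (ha : W' x a < W x a)
    (hb : W x b < W' x b) : overlap W W' < overlap (transfer W x a b) W' := by
  refine sum_lt_sum (fun p _ => sum_le_sum fun q _ => min_le_min_transfer hab ha p q)
    ⟨x, mem_univ _, sum_lt_sum (fun q _ => min_le_min_transfer hab ha x q) ⟨b, mem_univ _, ?_⟩⟩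
  have h := transfer_add_ite hab (Nat.zero_lt_of_lt ha) x b
  simp only [hab.symm, and_false, if_false, and_self, if_true] at h
  omega

lemma overlap_transfer_transfer {W W' : X → X → ℕ} {x a b : X} (hab : a ≠ b) (ha : 0 < W x a)
    (ha' : 0 < W' x a) : overlap (transfer W x a b) (transfer W' x a b) = overlap W W' := by
  have h := sum_congr rfl fun p (_ : p ∈ univ) => sum_congr rfl fun q (_ : q ∈ univ) =>
    show min (transfer W x a b p q) (transfer W' x a b p q) + (if p = x ∧ q = a then 1 else 0) =
        min (W p q) (W' p q) + (if p = x ∧ q = b then 1 else 0) by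
      have := transfer_add_ite hab ha p q
      have := transfer_add_ite hab ha' p q
      split_ifs at * <;> omega
  simp only [sum_add_distrib, ite_and, sum_ite_irrel, sum_ite_eq', mem_univ, if_true,
    sum_const_zero] at h
  exact Nat.add_right_cancel h

variable {E : X → X → Prop} {α β : X → ℕ}

lemma isAlloc_transfer {W : X → X → ℕ} (hW : IsAlloc E α β W) {x a b : X} (hab : a ≠ b)
    (ha : 0 < W x a) (hb : E x b) (hfree : colSum W b < β b) :
    IsAlloc E α β (transfer W x a b) := by
  obtain ⟨⟨hE, -, hcol⟩, hrow⟩ := hW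
  have hrow' p : rowSum (transfer W x a b) p = α p := (rowSum_transfer hab ha p).trans (hrow p)
  refine ⟨⟨fun p q hpq => ?_, fun p => (hrow' p).le, fun q => ?_⟩, hrow'⟩
  · have hxb : ¬(p = x ∧ q = b) := fun ⟨hp, hq⟩ => hpq (hp ▸ hq ▸ hb)
    have := transfer_add_ite hab ha p q
    rw [if_neg hxb, hE p q hpq] at this
    omega
  · have hq := colSum_transfer hab ha q
    have : colSum W q ≤ β q := hcol q
    change colSum _ q ≤ β q
    split_ifs at hq with h1 h2 <;> subst_vars <;> omega

variable (E α β) in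
def TransferStep (W V : X → X → ℕ) : Prop :=
  IsAlloc E α β W ∧ ∃ x a b, a ≠ b ∧ 0 < W x a ∧ E x b ∧ colSum W b < β b ∧ V = transfer W x a b

lemma TransferStep.isAlloc {W V : X → X → ℕ} (h : TransferStep E α β W V) :
    IsAlloc E α β V := by
  obtain ⟨hW, x, a, b, hab, ha, hb, hfree, rfl⟩ := h
  exact isAlloc_transfer hW hab ha hb hfree

lemma TransferStep.symm {W V : X → X → ℕ} (h : TransferStep E α β W V) :
    TransferStep E α β V W := by
  obtain ⟨hW, x, a, b, hab, ha, hb, hfree, rfl⟩ := h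
  have hxb := transfer_add_ite hab ha x b
  have hcol := colSum_transfer_self hab ha
  have : colSum W a ≤ β a := hW.1.2.2 a
  simp only [and_self, if_true, hab.symm, and_false, if_false] at hxb
  exact ⟨isAlloc_transfer hW hab ha hb hfree, x, b, a, hab.symm, by omega, hW.1.edge ha,
    by omega, (transfer_transfer hab ha).symm⟩

lemma TransferStep.moveStep {M : X → (X → X → ℕ) → Finset (X → X → ℕ)}
    (hM : IsAdmissible E α β M) {W V : X → X → ℕ} (h : TransferStep E α β W V) :
    MoveStep M W V := by
  obtain ⟨hW, x, a, b, hab, ha, hb, hfree, rfl⟩ := h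
  exact ⟨x, hM.2.2.1 x W hW.1 a b hab ha hb hfree⟩

variable (E α β) in
abbrev TransferReach : (X → X → ℕ) → (X → X → ℕ) → Prop :=
  Relation.ReflTransGen (TransferStep E α β)

lemma TransferReach.symm {W V : X → X → ℕ} (h : TransferReach E α β W V) :
    TransferReach E α β V W := by
  induction h with
  | refl => rfl
  | tail _ hstep ih => exact ih.head hstep.symm

lemma TransferReach.isAlloc {W V : X → X → ℕ} (h : TransferReach E α β W V)
    (hW : IsAlloc E α β W) : IsAlloc E α β V := by
  induction h with
  | refl => exact hW
  | tail _ hstep _ => exact hstep.isAlloc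

lemma TransferReach.transfer {W : X → X → ℕ} (hW : IsAlloc E α β W) {x a b : X} (hab : a ≠ b)
    (ha : 0 < W x a) (hb : E x b) (hfree : colSum W b < β b) :
    TransferReach E α β W (transfer W x a b) :=
  .single ⟨hW, x, a, b, hab, ha, hb, hfree, rfl⟩

end Transfer

section Improve

variable {X : Type*} [Fintype X] [DecidableEq X] {E : X → X → Prop} {α β : X → ℕ}

variable (E α β) in
def Improvable (W W' : X → X → ℕ) : Prop :=
  ∃ V V', TransferReach E α β W V ∧ TransferReach E α β W' V' ∧ overlap W W' < overlap V V'

lemma Improvable.symm {W W' : X → X → ℕ} (h : Improvable E α β W W') : Improvable E α β W' W := by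
  obtain ⟨V, V', hV, hV', hlt⟩ := h
  exact ⟨V', V, hV', hV, by rwa [overlap_comm, overlap_comm V']⟩

lemma Improvable.of_reach {W W' V V' : X → X → ℕ} (hV : TransferReach E α β W V)
    (hV' : TransferReach E α β W' V') (hle : overlap W W' ≤ overlap V V')
    (h : Improvable E α β V V') : Improvable E α β W W' := by
  obtain ⟨U, U', hU, hU', hlt⟩ := h
  exact ⟨U, U', hV.trans hU, hV'.trans hU', hle.trans_lt hlt⟩

lemma improvable_of_lt_of_free {W W' : X → X → ℕ} (hW : IsAlloc E α β W)
    (hW' : IsAlloc E α β W') {p y : X} (hfree : colSum W y < β y) (hlt : W p y < W' p y) :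
    Improvable E α β W W' := by
  obtain ⟨q, hq⟩ : ∃ q, W' p q < W p q := by
    by_contra! h
    have := sum_lt_sum (fun q _ => h q) ⟨y, mem_univ _, hlt⟩
    rw [hW.2 p, hW'.2 p] at this
    exact lt_irrefl _ this
  have hqy : q ≠ y := by rintro rfl; omega
  exact ⟨transfer W p q y, W', .transfer hW hqy (by omega) (hW'.1.edge (by omega)) hfree, .refl,
    overlap_lt_transfer hqy hq hlt⟩

lemma improvable_of_colSum_lt {W W' : X → X → ℕ} (hW : IsAlloc E α β W)
    (hW' : IsAlloc E α β W') {y : X} (hlt : colSum W y < colSum W' y) :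
    Improvable E α β W W' :=
  let ⟨_, _, hp⟩ := exists_lt_of_sum_lt hlt
  improvable_of_lt_of_free hW hW' (hlt.trans_le (hW'.1.2.2 y)) hp

lemma improvable_of_free_of_ne {W W' : X → X → ℕ} (hW : IsAlloc E α β W)
    (hW' : IsAlloc E α β W') {p y : X} (hfree : colSum W y < β y) (hfree' : colSum W' y < β y)
    (hne : W p y ≠ W' p y) : Improvable E α β W W' := by
  rcases hne.lt_or_gt with hlt | hlt
  · exact improvable_of_lt_of_free hW hW' hfree hlt
  · exact (improvable_of_lt_of_free hW' hW hfree' hlt).symm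

end Improve


section Drain

variable {X : Type*} [Fintype X] [DecidableEq X] {E : X → X → Prop} {α β : X → ℕ}

variable (E β) in
/-- `DrainPath E β W W' S c`: the same chain of moves, through the resources in `S`, makes `c`
unsaturated in both `W` and `W'`. -/
inductive DrainPath (W W' : X → X → ℕ) : Finset X → X → Prop
  | free {y : X} : colSum W y < β y → colSum W' y < β y → DrainPath W W' {y} y
  | step {x c c' : X} {S : Finset X} : 0 < W x c → 0 < W' x c → E x c' → c ∉ S →
      DrainPath W W' S c' → DrainPath W W' (insert c S) c

namespace DrainPath

variable {W W' : X → X → ℕ} {S : Finset X} {c : X}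

lemma mem (h : DrainPath E β W W' S c) : c ∈ S := by
  cases h <;> simp

lemma exists_of_mem (h : DrainPath E β W W' S c) {y : X} (hy : y ∈ S) :
    ∃ T, DrainPath E β W W' T y := by
  induction h with
  | free hfree hfree' =>
    obtain rfl := mem_singleton.1 hy
    exact ⟨_, .free hfree hfree'⟩
  | step hx hx' hE hc hd ih =>
    rcases mem_insert.1 hy with rfl | hy
    · exact ⟨_, .step hx hx' hE hc hd⟩
    · exact ih hy

lemma exists_transferReach (h : DrainPath E β W W' S c) (hW : IsAlloc E α β W)
    (hW' : IsAlloc E α β W') :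
    ∃ V V', TransferReach E α β W V ∧ TransferReach E α β W' V' ∧
      colSum V c < β c ∧ colSum V' c < β c ∧ overlap V V' = overlap W W' ∧
      (∀ p q, V p q + W' p q = V' p q + W p q) ∧ ∀ p, ∀ q ∉ S, V p q = W p q := by
  induction h with
  | free hfree hfree' =>
    exact ⟨W, W', .refl, .refl, hfree, hfree', rfl, fun _ _ => add_comm _ _, fun _ _ _ => rfl⟩
  | @step x c c' S hx hx' hE hc hd ih =>
    obtain ⟨V, V', hV, hV', hfree, hfree', hov, hdiff, hoff⟩ := ih
    have hcc' : c ≠ c' := fun h => hc (h ▸ hd.mem)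
    have hVx : 0 < V x c := hoff x c hc ▸ hx
    have hVx' : 0 < V' x c := by have := hdiff x c; have := hoff x c hc; omega
    have hfree_c {U : X → X → ℕ} (hU : IsAlloc E α β U) (hUx : 0 < U x c) :
        colSum (transfer U x c c') c < β c := by
      have := colSum_transfer_self hcc' hUx
      have : colSum U c ≤ β c := hU.1.2.2 c
      omega
    refine ⟨transfer V x c c', transfer V' x c c',
      hV.trans (TransferReach.transfer (hV.isAlloc hW) hcc' hVx hE hfree),
      hV'.trans (TransferReach.transfer (hV'.isAlloc hW') hcc' hVx' hE hfree'),
      hfree_c (hV.isAlloc hW) hVx, hfree_c (hV'.isAlloc hW') hVx',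
      (overlap_transfer_transfer hcc' hVx hVx').trans hov, fun p q => ?_, fun p q hq => ?_⟩
    · have := transfer_add_ite hcc' hVx p q
      have := transfer_add_ite hcc' hVx' p q
      have := hdiff p q
      omega
    · obtain ⟨hqc, hqS⟩ : q ≠ c ∧ q ∉ S := by simpa only [mem_insert, not_or] using hq
      have hqc' : q ≠ c' := fun h => hqS (h ▸ hd.mem)
      have := transfer_add_ite hcc' hVx p q
      simp only [hqc, hqc', and_false, if_false, add_zero] at this
      rw [this, hoff p q hqS]

lemma improvable (h : DrainPath E β W W' S c) (hW : IsAlloc E α β W)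
    (hW' : IsAlloc E α β W') {p : X} (hne : W p c ≠ W' p c) : Improvable E α β W W' := by
  obtain ⟨V, V', hV, hV', hfree, hfree', hov, hdiff, -⟩ := h.exists_transferReach hW hW'
  refine .of_reach hV hV' hov.ge
    (improvable_of_free_of_ne (hV.isAlloc hW) (hV'.isAlloc hW') hfree hfree' (p := p) ?_)
  have := hdiff p c
  omega

/-- Once `c` is drained, unit `x` moves an atom from `y` into `c`, which leaves `y` with less load
than in the other state. -/
lemma improvable_of_lt (h : DrainPath E β W W' S c) (hW : IsAlloc E α β W)
    (hW' : IsAlloc E α β W') {x y : X} (hy : y ∉ S) (hxy : W' x y < W x y) (hE : E x c)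
    (hcol : colSum W y ≤ colSum W' y) : Improvable E α β W W' := by
  obtain ⟨V, V', hV, hV', hfree, -, hov, hdiff, hoff⟩ := h.exists_transferReach hW hW'
  have hVy p : V p y = W p y := hoff p y hy
  have hV'y p : V' p y = W' p y := by have := hdiff p y; have := hVy p; omega
  have hyc : y ≠ c := fun h' => hy (h' ▸ h.mem)
  have hVxy : V' x y < V x y := by rw [hVy, hV'y]; exact hxy
  have := colSum_transfer_self (b := c) hyc (Nat.zero_lt_of_lt hVxy)
  have : colSum V y = colSum W y := sum_congr rfl fun p _ => hVy p
  have : colSum V' y = colSum W' y := sum_congr rfl fun p _ => hV'y p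
  have hstep := TransferReach.transfer (hV.isAlloc hW) hyc (Nat.zero_lt_of_lt hVxy) hE hfree
  exact .of_reach (hV.trans hstep) hV' (hov.symm.le.trans (overlap_le_transfer hyc hVxy))
    (improvable_of_colSum_lt (hstep.isAlloc (hV.isAlloc hW)) (hV'.isAlloc hW') (y := y) (by omega))

end DrainPath

end Drain

section Main

variable {X : Type*} [Fintype X] [DecidableEq X] {E : X → X → Prop} [DecidableRel E]
  {α β : X → ℕ}

/-- If no improvement exists, the two states have the same column sums, and the resources that
cannot be drained form a closed set carrying load but containing no unsaturated resource. -/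
lemma improvable_of_ne
    (hstrict : ∀ D : Finset X, D.Nonempty → ∑ x ∈ D, α x < ∑ y ∈ NSet E D, β y)
    {W W' : X → X → ℕ} (hW : IsAlloc E α β W) (hW' : IsAlloc E α β W') (hne : W ≠ W') :
    Improvable E α β W W' := by
  by_contra hni
  have hcol y : colSum W y = colSum W' y := le_antisymm
    (not_lt.1 fun h => hni (improvable_of_colSum_lt hW' hW h).symm)
    (not_lt.1 fun h => hni (improvable_of_colSum_lt hW hW' h))
  classical
  set C := univ.filter fun y => ∀ S, ¬ DrainPath E β W W' S y
  have hC : ∀ y ∈ C, ∀ x, 0 < W x y → ∀ y', E x y' → y' ∈ C := by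
    intro y hy x hxy y' hE
    simp only [C, mem_filter, mem_univ, true_and] at hy ⊢
    intro S hd
    have hyS : y ∉ S := fun h => let ⟨T, hT⟩ := hd.exists_of_mem h; hy T hT
    rcases Nat.eq_zero_or_pos (W' x y) with h0 | hpos
    · exact hni (hd.improvable_of_lt hW hW' hyS (h0 ▸ hxy) hE (hcol y).le)
    · exact hy _ (.step hxy hpos hE hyS hd)
  have hload : ∃ y ∈ C, 0 < colSum W y := by
    obtain ⟨p, y, hpy⟩ : ∃ p y, W p y ≠ W' p y := by
      by_contra! h
      exact hne (funext fun p => funext (h p))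
    refine ⟨y, mem_filter.2 ⟨mem_univ _, fun S hd => hni (hd.improvable hW hW' hpy)⟩, ?_⟩
    refine Nat.pos_of_ne_zero fun h0 => hpy ?_
    rw [sum_eq_zero_iff.1 h0 p (mem_univ p),
      sum_eq_zero_iff.1 ((hcol y).symm.trans h0) p (mem_univ p)]
  obtain ⟨y, hy, hfree⟩ := exists_colSum_lt_of_closed hstrict hW.1 C hC hload
  exact (mem_filter.1 hy).2 {y} (.free hfree (hcol y ▸ hfree))

theorem transferReach_of_isAlloc
    (hstrict : ∀ D : Finset X, D.Nonempty → ∑ x ∈ D, α x < ∑ y ∈ NSet E D, β y)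
    {W W' : X → X → ℕ} (hW : IsAlloc E α β W) (hW' : IsAlloc E α β W') :
    TransferReach E α β W W' := by
  induction hn : ∑ x, α x - overlap W W' using Nat.strong_induction_on generalizing W W' with
  | _ n ih =>
  by_cases h : W = W'
  · exact h ▸ .refl
  obtain ⟨V, V', hV, hV', hlt⟩ := improvable_of_ne hstrict hW hW' h
  have := overlap_le_sum (hV.isAlloc hW) V'
  exact hV.trans ((ih _ (by omega) (hV.isAlloc hW) (hV'.isAlloc hW') rfl).trans hV'.symm)

end Main

/-- under the strict existence condition, for any admissible
family the graph `ℒ` on the set of allocation states is connected: any two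
allocation states are joined by a path in `ℒ`. -/
theorem alloc_graph_connected {X : Type*} [Fintype X] [DecidableEq X]
    (E : X → X → Prop) [DecidableRel E] (α β : X → ℕ)
    (hstrict : ∀ D : Finset X, D.Nonempty →
      ∑ x ∈ D, α x < ∑ y ∈ NSet E D, β y)
    (M : X → (X → X → ℕ) → Finset (X → X → ℕ))
    (hM : IsAdmissible E α β M) :
    ∀ W W' : X → X → ℕ, IsAlloc E α β W → IsAlloc E α β W' →
      Relation.ReflTransGen (MoveStep M) W W' := by
  intro W W' hW hW'
  exact Relation.ReflTransGen.mono (fun _ _ h => TransferStep.moveStep hM h) _ _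
    (transferReach_of_isAlloc hstrict hW hW')
end

section
/- Let (M_{x̄}(W)) be an admissible family, let γ > 0, and for an allocation state W ∈ 𝒲 and unit x̄ define Z_{x̄}(W) = Σ_{W̃ ∈ M_{x̄}(W)} exp(γ · U_{x̄}(W̃)) (a finite sum, since 𝒲_p is finite), and for W' ∈ M_{x̄}(W) define the noisy-best-response transition probability P_{x̄}(W → W') = exp(γ · U_{x̄}(W')) / max(Z_{x̄}(W), Z_{x̄}(W')). Then detailed balance with respect to the Gibbs weights exp(γΨ) holds: for all allocation states W, W' ∈ 𝒲 and every x̄ with W' ∈ M_{x̄}(W) (so that also W ∈ M_{x̄}(W')), one has exp(γ·Ψ(W)) · P_{x̄}(W → W') = exp(γ·Ψ(W')) · P_{x̄}(W' → W). -/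
open Finset

/-- The normalizing constant `Z_{x̄}(W) = Σ_{W̃ ∈ M_{x̄}(W)} exp(γ U_{x̄}(W̃))`. -/
noncomputable def Zconst {X : Type*} [Fintype X] (E : X → X → Prop) [DecidableRel E]
    (f g : X → (X → ℕ) → ℝ) (γ : ℝ)
    (M : X → (X → X → ℕ) → Finset (X → X → ℕ)) (xbar : X) (W : X → X → ℕ) : ℝ :=
  ∑ Wt ∈ M xbar W, Real.exp (γ * Util E f g xbar Wt)

/-- The noisy best response transition probability
`P_{x̄}(W → W') = exp(γ U_{x̄}(W')) / max(Z_{x̄}(W), Z_{x̄}(W'))`. -/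
noncomputable def nbrProb {X : Type*} [Fintype X] (E : X → X → Prop) [DecidableRel E]
    (f g : X → (X → ℕ) → ℝ) (γ : ℝ)
    (M : X → (X → X → ℕ) → Finset (X → X → ℕ)) (xbar : X) (W W' : X → X → ℕ) : ℝ :=
  Real.exp (γ * Util E f g xbar W') /
    max (Zconst E f g γ M xbar W) (Zconst E f g γ M xbar W')

/-!
`Ψ` is an exact potential for the utilities: the terms of `Ψ(W)` not appearing in `U_{x̄}(W)`
are the rows `x ≠ x̄` and the columns `y ∉ N_{x̄}`, and neither changes under a move of `x̄`
(on a column `y ∉ N_{x̄}` the entry of row `x̄` is forced to be `0`). Hence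
`Ψ(W) + U_{x̄}(W') = Ψ(W') + U_{x̄}(W)`, and detailed balance follows because the
denominator `max (Z_{x̄}(W)) (Z_{x̄}(W'))` is symmetric in `W` and `W'`.
-/

section Potential

variable {X : Type*} [Fintype X] [DecidableEq X] (E : X → X → Prop) [DecidableRel E]
  (f g : X → (X → ℕ) → ℝ)

theorem Psi_eq_Util_add (x : X) (W : X → X → ℕ) :
    Psi f g W = Util E f g x W + (∑ x' ∈ univ.erase x, f x' (W x') +
      ∑ y ∈ univ with ¬ E x y, g y (fun x' => W x' y)) := by
  rw [Psi, Util, ← add_sum_erase univ (fun x' => f x' (W x')) (mem_univ x),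
    ← sum_filter_add_sum_filter_not univ (E x) (fun y => g y (fun x' => W x' y))]
  ring

theorem Psi_sub_Util_eq_of_eq_off_row {x : X} {W W' : X → X → ℕ}
    (hrow : ∀ x', x' ≠ x → ∀ y, W' x' y = W x' y)
    (hW : ∀ y, ¬ E x y → W x y = 0) (hW' : ∀ y, ¬ E x y → W' x y = 0) :
    Psi f g W - Util E f g x W = Psi f g W' - Util E f g x W' := by
  have hf : ∑ x' ∈ univ.erase x, f x' (W x') = ∑ x' ∈ univ.erase x, f x' (W' x') :=
    sum_congr rfl fun x' hx' => by rw [funext (hrow x' (ne_of_mem_erase hx'))]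
  have hg : ∑ y ∈ univ with ¬ E x y, g y (fun x' => W x' y) =
      ∑ y ∈ univ with ¬ E x y, g y (fun x' => W' x' y) := by
    refine sum_congr rfl fun y hy => congrArg (g y) (funext fun x' => ?_)
    have hxy : ¬ E x y := (mem_filter.mp hy).2
    by_cases hx' : x' = x
    · rw [hx', hW y hxy, hW' y hxy]
    · exact (hrow x' hx' y).symm
  rw [Psi_eq_Util_add E f g x W, Psi_eq_Util_add E f g x W', hf, hg]
  ring

end Potential

theorem exp_mul_div_max_eq_of_add_eq {γ ψ ψ' u u' Z Z' : ℝ} (h : ψ + u' = ψ' + u) :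
    Real.exp (γ * ψ) * (Real.exp (γ * u') / max Z Z') =
      Real.exp (γ * ψ') * (Real.exp (γ * u) / max Z' Z) := by
  rw [max_comm Z' Z, mul_div_assoc', mul_div_assoc', ← Real.exp_add, ← Real.exp_add,
    ← mul_add, ← mul_add, h]

theorem detailed_balance_general {X : Type*} [Fintype X] [DecidableEq X]
    (E : X → X → Prop) [DecidableRel E] (α β : X → ℕ)
    (f g : X → (X → ℕ) → ℝ) (γ : ℝ)
    (M : X → (X → X → ℕ) → Finset (X → X → ℕ))
    (hM : IsAdmissible E α β M)
    (W W' : X → X → ℕ) (hW : IsAlloc E α β W)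
    (xbar : X) (hmem : W' ∈ M xbar W) :
    Real.exp (γ * Psi f g W) * nbrProb E f g γ M xbar W W' =
      Real.exp (γ * Psi f g W') * nbrProb E f g γ M xbar W' W := by
  obtain ⟨hW'p, hrow, -, -⟩ := hM.1 xbar W hW.1 W' hmem
  have hpot := Psi_sub_Util_eq_of_eq_off_row E f g hrow (hW.1.1 xbar) (hW'p.1 xbar)
  exact exp_mul_div_max_eq_of_add_eq (by linarith)

/-- detailed balance with respect to the Gibbs weights
`exp(γ Ψ)`: for allocation states `W, W'` with `W' ∈ M_{x̄}(W)`,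
`exp(γΨ(W)) P_{x̄}(W → W') = exp(γΨ(W')) P_{x̄}(W' → W)`. -/
theorem detailed_balance {X : Type*} [Fintype X] [DecidableEq X]
    (E : X → X → Prop) [DecidableRel E] (α β : X → ℕ)
    (f g : X → (X → ℕ) → ℝ) (γ : ℝ) (hγ : 0 < γ)
    (M : X → (X → X → ℕ) → Finset (X → X → ℕ))
    (hM : IsAdmissible E α β M)
    (W W' : X → X → ℕ) (hW : IsAlloc E α β W) (hW' : IsAlloc E α β W')
    (xbar : X) (hmem : W' ∈ M xbar W) :
    Real.exp (γ * Psi f g W) * nbrProb E f g γ M xbar W W' =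
      Real.exp (γ * Psi f g W') * nbrProb E f g γ M xbar W' W :=
  detailed_balance_general E α β f g γ M hM W W' hW xbar hmem
end

section
/- Let G = (X, E) be an undirected s-regular graph with s ≥ 1, suppose α_x = a and β_x = b for every x ∈ X with 1 ≤ a ≤ b, and consider the specific functional Ψ with constants C^{all} > 0, C^{agg} > 0, C^{con} > 0 (the same C^{con} for every resource). Then an allocation state W ∈ 𝒲 maximizes Ψ over 𝒲 if and only if W is a matching allocation state; in particular the set of maximizers is nonempty and coincides with the set of matching allocation states. -/
open Finset

/-- The specific functional
`Ψ(W) = Σ_x (C^{all} Σ_y W_{xy} + C^{agg} Σ_y W_{xy}²) − Σ_y C^{con}(Σ_x W_{xy})²`. -/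
def PsiSpec {X : Type*} [Fintype X] (Call Cagg Ccon : ℝ) (W : X → X → ℕ) : ℝ :=
  ∑ x, (Call * ∑ y, (W x y : ℝ) + Cagg * ∑ y, (W x y : ℝ) ^ 2) -
    ∑ y, Ccon * (∑ x, (W x y : ℝ)) ^ 2

/-- A matching allocation state: an allocation state of the form
`W_{xy} = a` if `y = σ x` and `0` otherwise, for a permutation `σ` along edges. -/
def IsMatchingAlloc {X : Type*} [Fintype X] [DecidableEq X] (E : X → X → Prop) (α β : X → ℕ)
    (a : ℕ) (W : X → X → ℕ) : Prop :=
  IsAlloc E α β W ∧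
    ∃ σ : Equiv.Perm X, (∀ x, E x (σ x)) ∧
      ∀ x y, W x y = if y = σ x then a else 0

/-!
On allocation states with all row sums equal to `a`,
`Ψ(W) = n (C^{all} a + (C^{agg} - C^{con}) a²)`
`       - C^{agg} Σ_x (a² - Σ_y W_{xy}²) - C^{con} Σ_y (Σ_x W_{xy} - a)²`.
Both deficits are nonnegative, so `Ψ` is bounded by the first term, and it attains this bound
exactly when every row is concentrated in a single entry `a` and every column sums to `a`, i.e.
when `W` is `a` times a permutation matrix; the permutation runs along edges because `W`
vanishes off `E`. Such a permutation exists by Hall's theorem: in an `s`-regular symmetric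
relation, double counting the edges from `S` gives `s |S| ≤ s |N(S)|`.
-/

section Hall

variable {X : Type*} [Fintype X] [DecidableEq X] {E : X → X → Prop} [DecidableRel E] {s : ℕ}

lemma card_le_card_biUnion_of_regular (hs : 0 < s) (hsym : ∀ x y, E x y → E y x)
    (hreg : ∀ x, #{y | E x y} = s) (S : Finset X) :
    #S ≤ #(S.biUnion fun x => {y | E x y}) := by
  refine Nat.le_of_mul_le_mul_right (card_mul_le_card_mul E (fun x hx => ?_) fun y _ => ?_) hs
  · rw [← hreg x]
    exact card_le_card fun y hy =>
      (mem_bipartiteAbove E).2 ⟨mem_biUnion.2 ⟨x, hx, hy⟩, (mem_filter.1 hy).2⟩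
  · rw [← hreg y]
    exact card_le_card fun x hx =>
      mem_filter.2 ⟨mem_univ x, hsym _ _ ((mem_bipartiteBelow E).1 hx).2⟩

lemma exists_perm_forall_rel_of_regular (hs : 0 < s) (hsym : ∀ x y, E x y → E y x)
    (hreg : ∀ x, #{y | E x y} = s) : ∃ σ : Equiv.Perm X, ∀ x, E x (σ x) := by
  obtain ⟨f, hf, hfE⟩ := (all_card_le_biUnion_card_iff_exists_injective _).1
    (card_le_card_biUnion_of_regular hs hsym hreg)
  exact ⟨Equiv.ofBijective f hf.bijective_of_finite, fun x => (mem_filter.1 (hfE x)).2⟩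

end Hall

lemma sum_pi_single_perm_apply {X M : Type*} [Fintype X] [DecidableEq X] [AddCommMonoid M]
    (σ : Equiv.Perm X) (m : M) (y : X) : ∑ x, (Pi.single (σ x) m : X → M) y = m := by
  rw [Equiv.sum_comp σ fun z => (Pi.single z m : X → M) y]
  simp

lemma exists_eq_single_of_sum_sq_eq {ι : Type*} [Fintype ι] [DecidableEq ι] {w : ι → ℕ}
    {a : ℕ} (ha : 0 < a) (hsum : ∑ i, w i = a) (hsq : ∑ i, w i ^ 2 = a ^ 2) :
    ∃ i, w = Pi.single i a := by
  have hle (i : ι) : w i ≤ a := hsum ▸ single_le_sum (fun _ _ => Nat.zero_le _) (mem_univ i)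
  have hsq_le : ∀ i ∈ univ, w i ^ 2 ≤ w i * a := fun i _ => by
    rw [sq]; exact Nat.mul_le_mul_left _ (hle i)
  have hsq_eq := (sum_eq_sum_iff_of_le hsq_le).1 (by rw [hsq, ← sum_mul, hsum, sq])
  obtain ⟨i, hi⟩ : ∃ i, w i ≠ 0 := by
    by_contra! h
    simp only [h, sum_const_zero] at hsum
    omega
  have hwi : w i = a := Nat.eq_of_mul_eq_mul_left (Nat.pos_of_ne_zero hi) <| by
    rw [← sq]; exact hsq_eq i (mem_univ i)
  have hrest : ∑ j ∈ univ.erase i, w j = 0 := by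
    have := add_sum_erase univ w (mem_univ i)
    omega
  refine ⟨i, funext fun j => ?_⟩
  rcases eq_or_ne j i with rfl | hj
  · rw [hwi, Pi.single_eq_same]
  · rw [Pi.single_eq_of_ne hj]
    exact sum_eq_zero_iff.1 hrest j (mem_erase.2 ⟨hj, mem_univ j⟩)

lemma exists_perm_eq_single_of_sums {X : Type*} [Fintype X] [DecidableEq X] {W : X → X → ℕ}
    {a : ℕ} (ha : 0 < a) (hrow : ∀ x, ∑ y, W x y = a)
    (hrow_sq : ∀ x, ∑ y, W x y ^ 2 = a ^ 2)
    (hcol : ∀ y, ∑ x, W x y = a) : ∃ σ : Equiv.Perm X, ∀ x, W x = Pi.single (σ x) a := by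
  choose f hf using fun x => exists_eq_single_of_sum_sq_eq ha (hrow x) (hrow_sq x)
  have hf_inj : f.Injective := by
    intro x₁ x₂ h
    by_contra hne
    have := sum_le_sum_of_subset (f := fun x => W x (f x₂)) (subset_univ {x₁, x₂})
    simp only [sum_pair hne, hcol, hf x₁, hf x₂, h, Pi.single_eq_same] at this
    omega
  exact ⟨Equiv.ofBijective f hf_inj.bijective_of_finite, hf⟩

section Alloc

variable {X : Type*} [Fintype X] [DecidableEq X] {E : X → X → Prop} {β : X → ℕ} {a : ℕ}

lemma isMatchingAlloc_of_perm {b : ℕ} (hab : a ≤ b) {σ : Equiv.Perm X}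
    (hσ : ∀ x, E x (σ x)) :
    IsMatchingAlloc E (fun _ => a) (fun _ => b) a fun x => Pi.single (σ x) a := by
  have hrow (x : X) : ∑ y, (Pi.single (σ x) a : X → ℕ) y = a := by simp
  refine ⟨⟨⟨fun x y hxy => ?_, fun x => (hrow x).le, fun y => ?_⟩, hrow⟩, σ, hσ,
    fun x y => Pi.single_apply _ _ _⟩
  · exact Pi.single_eq_of_ne (M := fun _ => ℕ) (fun h : y = σ x => hxy (h ▸ hσ x)) a
  · rw [sum_pi_single_perm_apply]
    exact hab

lemma isMatchingAlloc_iff (ha : 0 < a) {W : X → X → ℕ} (hW : IsAlloc E (fun _ => a) β W) :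
    IsMatchingAlloc E (fun _ => a) β a W ↔
      (∀ x, ∑ y, W x y ^ 2 = a ^ 2) ∧ ∀ y, ∑ x, W x y = a := by
  constructor
  · rintro ⟨-, σ, -, hσ⟩
    obtain rfl : W = fun x => Pi.single (σ x) a :=
      funext₂ fun x y => (hσ x y).trans (Pi.single_apply _ _ _).symm
    refine ⟨fun x => ?_, sum_pi_single_perm_apply σ a⟩
    simp [Pi.single_apply, ite_pow]
  · rintro ⟨hrow_sq, hcol⟩
    obtain ⟨σ, hσ⟩ := exists_perm_eq_single_of_sums ha hW.2 hrow_sq hcol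
    refine ⟨hW, σ, fun x => ?_, fun x y => by rw [hσ, Pi.single_apply]⟩
    by_contra hE
    have := hW.1.1 x (σ x) hE
    rw [hσ x, Pi.single_eq_same] at this
    omega

end Alloc

section Psi

variable {X : Type*} [Fintype X] {Call Cagg Ccon : ℝ} {a : ℕ} {W : X → X → ℕ}

variable (X Call Cagg Ccon a) in
def psiSpecMax : ℝ := Fintype.card X * (Call * a + (Cagg - Ccon) * a ^ 2)

lemma psiSpec_eq_psiSpecMax_sub (hrow : ∀ x, ∑ y, W x y = a) :
    PsiSpec Call Cagg Ccon W = psiSpecMax X Call Cagg Ccon a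
      - Cagg * ∑ x, ((a : ℝ) ^ 2 - ∑ y, (W x y : ℝ) ^ 2)
      - Ccon * ∑ y, (∑ x, (W x y : ℝ) - a) ^ 2 := by
  have hrowR (x : X) : ∑ y, (W x y : ℝ) = a := by exact_mod_cast hrow x
  have htotal : ∑ y, ∑ x, (W x y : ℝ) = Fintype.card X * a := by
    rw [sum_comm]; simp [hrowR]
  simp only [PsiSpec, psiSpecMax, hrowR, sub_sq, sum_add_distrib, sum_sub_distrib, ← mul_sum,
    ← sum_mul, sum_const, card_univ, nsmul_eq_mul, htotal]
  ring

lemma sum_sq_le_sq_of_sum_eq (hrow : ∀ x, ∑ y, W x y = a) (x : X) :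
    ∑ y, W x y ^ 2 ≤ a ^ 2 :=
  hrow x ▸ sum_sq_le_sq_sum_of_nonneg fun _ _ => Nat.zero_le _

lemma psiSpec_le_psiSpecMax (hCagg : 0 ≤ Cagg) (hCcon : 0 ≤ Ccon)
    (hrow : ∀ x, ∑ y, W x y = a) :
    PsiSpec Call Cagg Ccon W ≤ psiSpecMax X Call Cagg Ccon a := by
  have hrow_sq (x : X) : ∑ y, (W x y : ℝ) ^ 2 ≤ (a : ℝ) ^ 2 := by
    exact_mod_cast sum_sq_le_sq_of_sum_eq hrow x
  have hdef_row := sum_nonneg fun x (_ : x ∈ univ) => sub_nonneg.2 (hrow_sq x)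
  have hdef_col := sum_nonneg fun y (_ : y ∈ univ) => sq_nonneg (∑ x, (W x y : ℝ) - a)
  rw [psiSpec_eq_psiSpecMax_sub hrow]
  linarith [mul_nonneg hCagg hdef_row, mul_nonneg hCcon hdef_col]

lemma psiSpec_eq_psiSpecMax_iff (hCagg : 0 < Cagg) (hCcon : 0 < Ccon)
    (hrow : ∀ x, ∑ y, W x y = a) :
    PsiSpec Call Cagg Ccon W = psiSpecMax X Call Cagg Ccon a ↔
      (∀ x, ∑ y, W x y ^ 2 = a ^ 2) ∧ ∀ y, ∑ x, W x y = a := by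
  have hrow_sq (x : X) : ∑ y, (W x y : ℝ) ^ 2 ≤ (a : ℝ) ^ 2 := by
    exact_mod_cast sum_sq_le_sq_of_sum_eq hrow x
  have hdef_row := fun x (_ : x ∈ univ) => sub_nonneg.2 (hrow_sq x)
  have hdef_col := fun y (_ : y ∈ univ) => sq_nonneg (∑ x, (W x y : ℝ) - a)
  rw [psiSpec_eq_psiSpecMax_sub hrow, sub_sub, sub_eq_self,
    add_eq_zero_iff_of_nonneg (mul_nonneg hCagg.le (sum_nonneg hdef_row))
      (mul_nonneg hCcon.le (sum_nonneg hdef_col)),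
    mul_eq_zero, mul_eq_zero, sum_eq_zero_iff_of_nonneg hdef_row,
    sum_eq_zero_iff_of_nonneg hdef_col]
  simp only [hCagg.ne', hCcon.ne', false_or, mem_univ, true_implies, sub_eq_zero, sq_eq_zero_iff]
  norm_cast
  simp only [eq_comm]

end Psi

theorem maximizers_are_matchings_general {X : Type*} [Fintype X] [DecidableEq X]
    (E : X → X → Prop) [DecidableRel E] (s : ℕ) (hs : 1 ≤ s)
    (hsym : ∀ x y, E x y → E y x)
    (hreg : ∀ x, (univ.filter fun y => E x y).card = s)
    (a b : ℕ) (ha : 1 ≤ a) (hab : a ≤ b)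
    (Call Cagg Ccon : ℝ) (hCagg : 0 < Cagg) (hCcon : 0 < Ccon) :
    (∃ W : X → X → ℕ, IsMatchingAlloc E (fun _ => a) (fun _ => b) a W) ∧
    ∀ W : X → X → ℕ, IsAlloc E (fun _ => a) (fun _ => b) W →
      ((∀ V : X → X → ℕ, IsAlloc E (fun _ => a) (fun _ => b) V →
          PsiSpec Call Cagg Ccon V ≤ PsiSpec Call Cagg Ccon W) ↔
        IsMatchingAlloc E (fun _ => a) (fun _ => b) a W) := by
  obtain ⟨σ, hσ⟩ := exists_perm_forall_rel_of_regular hs hsym hreg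
  have hmatching := isMatchingAlloc_of_perm hab hσ
  have hbound (V : X → X → ℕ) (hV : IsAlloc E (fun _ => a) (fun _ => b) V) :
      PsiSpec Call Cagg Ccon V ≤ psiSpecMax X Call Cagg Ccon a :=
    psiSpec_le_psiSpecMax hCagg.le hCcon.le hV.2
  have hattained :
      PsiSpec Call Cagg Ccon (fun x => Pi.single (σ x) a) = psiSpecMax X Call Cagg Ccon a :=
    (psiSpec_eq_psiSpecMax_iff hCagg hCcon hmatching.1.2).2
      ((isMatchingAlloc_iff ha hmatching.1).1 hmatching)
  refine ⟨⟨_, hmatching⟩, fun W hW => ?_⟩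
  rw [isMatchingAlloc_iff ha hW, ← psiSpec_eq_psiSpecMax_iff hCagg hCcon hW.2]
  exact ⟨fun hmax => le_antisymm (hbound W hW) (hattained ▸ hmax _ hmatching.1),
    fun hW_max V hV => hW_max ▸ hbound V hV⟩

/-- on an undirected `s`-regular graph with `α ≡ a`, `β ≡ b`,
`1 ≤ a ≤ b`, and `C^{all}, C^{agg}, C^{con} > 0`, the maximizers of `Ψ` over
the set of allocation states are exactly the matching allocation states, and
they exist. -/
theorem maximizers_are_matchings {X : Type*} [Fintype X] [DecidableEq X]
    (E : X → X → Prop) [DecidableRel E] (s : ℕ) (hs : 1 ≤ s)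
    (hsym : ∀ x y, E x y → E y x) (hirr : ∀ x, ¬ E x x)
    (hreg : ∀ x, (univ.filter fun y => E x y).card = s)
    (a b : ℕ) (ha : 1 ≤ a) (hab : a ≤ b)
    (Call Cagg Ccon : ℝ) (hCall : 0 < Call) (hCagg : 0 < Cagg) (hCcon : 0 < Ccon) :
    (∃ W : X → X → ℕ, IsMatchingAlloc E (fun _ => a) (fun _ => b) a W) ∧
    ∀ W : X → X → ℕ, IsAlloc E (fun _ => a) (fun _ => b) W →
      ((∀ V : X → X → ℕ, IsAlloc E (fun _ => a) (fun _ => b) V →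
          PsiSpec Call Cagg Ccon V ≤ PsiSpec Call Cagg Ccon W) ↔
        IsMatchingAlloc E (fun _ => a) (fun _ => b) a W) :=
  maximizers_are_matchings_general E s hs hsym hreg a b ha hab Call Cagg Ccon hCagg hCcon
end

section
/- Let G = (X, E) be an undirected s-regular graph with s ≥ 1, suppose α_x = a and β_x = b for every x ∈ X with 1 ≤ a ≤ b and s dividing a, and consider the specific functional Ψ with constants C^{all} > 0, C^{agg} < 0, C^{con} > 0 (the same C^{con} for every resource). Then the diffused allocation state W* defined by W*_{xy} = a/s if (x,y) ∈ E and W*_{xy} = 0 otherwise is the unique maximizer of Ψ over the set 𝒲 of allocation states. -/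
open Finset

/-! On allocation states every row sums to `a`, so the `C^{all}` term of `Ψ` is constant and the
column sums always total `|X| a`. Among vectors with a prescribed sum on a finite set, the sum of
squares is smallest exactly at the constant vector (expand around the mean). Hence the `C^{con}`
penalty is smallest when every column sums to `a`, which `W*` achieves by regularity and symmetry,
and, since `C^{agg} < 0`, the `C^{agg}` term is largest exactly when every row is constant `a / s`
on its `s` neighbours, i.e. only at `W*`. -/

section SumSq

variable {ι R : Type*} (T : Finset ι) {g : ι → R} {m : R}

theorem Finset.sum_sq_eq_card_mul_sq_add_sum_sub_sq [CommRing R]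
    (h : ∑ i ∈ T, g i = #T * m) :
    ∑ i ∈ T, g i ^ 2 = #T * m ^ 2 + ∑ i ∈ T, (g i - m) ^ 2 := by
  simp only [sub_sq, sum_add_distrib, sum_sub_distrib, ← sum_mul, ← mul_sum, sum_const,
    nsmul_eq_mul, h]
  ring

variable [CommRing R] [LinearOrder R] [IsStrictOrderedRing R]

theorem Finset.card_mul_sq_le_sum_sq (h : ∑ i ∈ T, g i = #T * m) :
    #T * m ^ 2 ≤ ∑ i ∈ T, g i ^ 2 := by
  rw [T.sum_sq_eq_card_mul_sq_add_sum_sub_sq h]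
  exact le_add_of_nonneg_right (sum_nonneg fun i _ => sq_nonneg _)

theorem Finset.card_mul_sq_lt_sum_sq (h : ∑ i ∈ T, g i = #T * m) (hne : ∃ i ∈ T, g i ≠ m) :
    #T * m ^ 2 < ∑ i ∈ T, g i ^ 2 := by
  rw [T.sum_sq_eq_card_mul_sq_add_sum_sub_sq h]
  obtain ⟨i, hi, hgi⟩ := hne
  exact lt_add_of_pos_right _ <|
    sum_pos' (fun i _ => sq_nonneg _) ⟨i, hi, sq_pos_of_ne_zero (sub_ne_zero.2 hgi)⟩

end SumSq

def diffusedState {X : Type*} (E : X → X → Prop) [DecidableRel E] (m : ℕ) : X → X → ℕ :=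
  fun x y => if E x y then m else 0

section Allocation

variable {X : Type*} [Fintype X] {E : X → X → Prop} [DecidableRel E] {s : ℕ}

theorem sum_diffusedState_row (hreg : ∀ x, #{y | E x y} = s) (m : ℕ) (x : X) :
    ∑ y, diffusedState E m x y = s * m := by
  simp only [diffusedState]
  rw [← sum_filter, sum_const, hreg, smul_eq_mul]

theorem sum_diffusedState_col (hsym : ∀ x y, E x y → E y x) (hreg : ∀ x, #{y | E x y} = s)
    (m : ℕ) (y : X) : ∑ x, diffusedState E m x y = s * m := by
  simp only [diffusedState]
  rw [← sum_filter, sum_const, ← hreg y, smul_eq_mul]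
  congr 2
  exact filter_congr fun x _ => ⟨hsym x y, hsym y x⟩

theorem isAlloc_diffusedState (hsym : ∀ x y, E x y → E y x) (hreg : ∀ x, #{y | E x y} = s)
    {a b : ℕ} (hdvd : s ∣ a) (hab : a ≤ b) :
    IsAlloc E (fun _ => a) (fun _ => b) (diffusedState E (a / s)) := by
  have hm : s * (a / s) = a := Nat.mul_div_cancel' hdvd
  refine ⟨⟨fun x y h => if_neg h, fun x => ?_, fun y => ?_⟩, fun x => ?_⟩
  · rw [sum_diffusedState_row hreg, hm]
  · rw [sum_diffusedState_col hsym hreg, hm]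
    exact hab
  · rw [sum_diffusedState_row hreg, hm]

theorem psiSpec_eq_of_sum_row (Call Cagg Ccon : ℝ) {W : X → X → ℕ} {a : ℕ}
    (hrow : ∀ x, ∑ y, W x y = a) :
    PsiSpec Call Cagg Ccon W = Call * (Fintype.card X * a) +
      Cagg * ∑ x, ∑ y, (W x y : ℝ) ^ 2 - Ccon * ∑ y, (∑ x, (W x y : ℝ)) ^ 2 := by
  have hrowR : ∀ x, ∑ y, (W x y : ℝ) = a := fun x => by exact_mod_cast hrow x
  simp only [PsiSpec, sum_add_distrib, ← mul_sum, hrowR, sum_const, card_univ, nsmul_eq_mul]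

theorem card_mul_sq_le_sum_sq_sum_col {W : X → X → ℕ} {a : ℕ} (hrow : ∀ x, ∑ y, W x y = a) :
    (Fintype.card X : ℝ) * a ^ 2 ≤ ∑ y, (∑ x, (W x y : ℝ)) ^ 2 := by
  rw [← card_univ]
  refine card_mul_sq_le_sum_sq _ ?_
  have hrowR : ∀ x, ∑ y, (W x y : ℝ) = a := fun x => by exact_mod_cast hrow x
  rw [sum_comm]
  simp only [hrowR, sum_const, nsmul_eq_mul]

theorem sum_filter_adj_eq_sum {M : Type*} [AddCommMonoid M] (f : ℕ → M) (hf : f 0 = 0)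
    {W : X → X → ℕ} {x : X} (hW0 : ∀ y, ¬E x y → W x y = 0) :
    ∑ y with E x y, f (W x y) = ∑ y, f (W x y) :=
  sum_filter_of_ne fun y _ hy => by_contra fun h => hy (by rw [hW0 y h, hf])

theorem sum_sq_diffusedState_row (hreg : ∀ x, #{y | E x y} = s) (m : ℕ) (x : X) :
    ∑ y, (diffusedState E m x y : ℝ) ^ 2 = s * m ^ 2 := by
  rw [← sum_filter_adj_eq_sum (fun n => (n : ℝ) ^ 2) (by simp) fun y h => if_neg h,
    ← hreg x, ← nsmul_eq_mul, ← sum_const]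
  exact sum_congr rfl fun y hy => by rw [diffusedState, if_pos (mem_filter.1 hy).2]

theorem sum_sq_diffusedState_row_lt (hreg : ∀ x, #{y | E x y} = s) {W : X → X → ℕ} {m : ℕ}
    {x : X} (hW0 : ∀ y, ¬E x y → W x y = 0) (hrow : ∑ y, W x y = s * m)
    (hne : W x ≠ diffusedState E m x) :
    ∑ y, (diffusedState E m x y : ℝ) ^ 2 < ∑ y, (W x y : ℝ) ^ 2 := by
  obtain ⟨y, hy⟩ := Function.ne_iff.1 hne
  have hxy : E x y := by_contra fun h => hy (by rw [hW0 y h, diffusedState, if_neg h])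
  rw [sum_sq_diffusedState_row hreg, ← hreg x,
    ← sum_filter_adj_eq_sum (fun n => (n : ℝ) ^ 2) (by simp) hW0]
  refine card_mul_sq_lt_sum_sq _ ?_ ⟨y, mem_filter.2 ⟨mem_univ y, hxy⟩, ?_⟩
  · rw [sum_filter_adj_eq_sum Nat.cast Nat.cast_zero hW0, hreg]
    exact_mod_cast hrow
  · simpa [diffusedState, hxy] using hy

theorem sum_sq_diffusedState_lt (hreg : ∀ x, #{y | E x y} = s) {W : X → X → ℕ} {m : ℕ}
    (hW0 : ∀ x y, ¬E x y → W x y = 0) (hrow : ∀ x, ∑ y, W x y = s * m)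
    (hne : W ≠ diffusedState E m) :
    ∑ x, ∑ y, (diffusedState E m x y : ℝ) ^ 2 < ∑ x, ∑ y, (W x y : ℝ) ^ 2 := by
  obtain ⟨x, hx⟩ := Function.ne_iff.1 hne
  refine sum_lt_sum (fun x _ => ?_)
    ⟨x, mem_univ x, sum_sq_diffusedState_row_lt hreg (hW0 x) (hrow x) hx⟩
  by_cases hx' : W x = diffusedState E m x
  · rw [hx']
  · exact (sum_sq_diffusedState_row_lt hreg (hW0 x) (hrow x) hx').le

theorem psiSpec_lt_psiSpec_diffusedState (hsym : ∀ x y, E x y → E y x)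
    (hreg : ∀ x, #{y | E x y} = s) {a b : ℕ} (hdvd : s ∣ a) {Call Cagg Ccon : ℝ}
    (hCagg : Cagg < 0) (hCcon : 0 ≤ Ccon) {W : X → X → ℕ}
    (hW : IsAlloc E (fun _ => a) (fun _ => b) W) (hne : W ≠ diffusedState E (a / s)) :
    PsiSpec Call Cagg Ccon W < PsiSpec Call Cagg Ccon (diffusedState E (a / s)) := by
  obtain ⟨⟨hW0, -, -⟩, hrow⟩ := hW
  have hm : s * (a / s) = a := Nat.mul_div_cancel' hdvd
  have hagg := sum_sq_diffusedState_lt hreg hW0 (fun x => (hrow x).trans hm.symm) hne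
  have hcon := card_mul_sq_le_sum_sq_sum_col hrow
  have hcon_star :
      ∑ y, (∑ x, (diffusedState E (a / s) x y : ℝ)) ^ 2 = Fintype.card X * a ^ 2 := by
    simp only [← Nat.cast_sum, sum_diffusedState_col hsym hreg, hm, sum_const, card_univ,
      nsmul_eq_mul]
  rw [psiSpec_eq_of_sum_row _ _ _ hrow,
    psiSpec_eq_of_sum_row _ _ _ fun x => (sum_diffusedState_row hreg _ x).trans hm, hcon_star]
  linarith [mul_lt_mul_of_neg_left hagg hCagg, mul_le_mul_of_nonneg_left hcon hCcon]

end Allocation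

theorem diffused_unique_maximizer_general {X : Type*} [Fintype X]
    (E : X → X → Prop) [DecidableRel E] (s : ℕ)
    (hsym : ∀ x y, E x y → E y x)
    (hreg : ∀ x, (univ.filter fun y => E x y).card = s)
    (a b : ℕ) (hab : a ≤ b) (hdvd : s ∣ a)
    (Call Cagg Ccon : ℝ) (hCagg : Cagg < 0) (hCcon : 0 < Ccon) :
    IsAlloc E (fun _ => a) (fun _ => b)
        (fun x y => if E x y then a / s else 0) ∧
      ∀ W : X → X → ℕ, IsAlloc E (fun _ => a) (fun _ => b) W →
        W ≠ (fun x y => if E x y then a / s else 0) →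
        PsiSpec Call Cagg Ccon W <
          PsiSpec Call Cagg Ccon (fun x y => if E x y then a / s else 0) :=
  ⟨isAlloc_diffusedState hsym hreg hdvd hab, fun _ hW hne =>
    psiSpec_lt_psiSpec_diffusedState hsym hreg hdvd hCagg hCcon.le hW hne⟩

/-- on an undirected `s`-regular graph with `α ≡ a`, `β ≡ b`,
`1 ≤ a ≤ b`, `s ∣ a`, and constants `C^{all} > 0`, `C^{agg} < 0`,
`C^{con} > 0`, the diffused allocation state `W*_{xy} = a/s` on edges and `0`
elsewhere is the unique maximizer of `Ψ` over the set of allocation states. -/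
theorem diffused_unique_maximizer {X : Type*} [Fintype X] [DecidableEq X]
    (E : X → X → Prop) [DecidableRel E] (s : ℕ) (hs : 1 ≤ s)
    (hsym : ∀ x y, E x y → E y x) (hirr : ∀ x, ¬ E x x)
    (hreg : ∀ x, (univ.filter fun y => E x y).card = s)
    (a b : ℕ) (ha : 1 ≤ a) (hab : a ≤ b) (hdvd : s ∣ a)
    (Call Cagg Ccon : ℝ) (hCall : 0 < Call) (hCagg : Cagg < 0) (hCcon : 0 < Ccon) :
    IsAlloc E (fun _ => a) (fun _ => b)
        (fun x y => if E x y then a / s else 0) ∧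
      ∀ W : X → X → ℕ, IsAlloc E (fun _ => a) (fun _ => b) W →
        W ≠ (fun x y => if E x y then a / s else 0) →
        PsiSpec Call Cagg Ccon W <
          PsiSpec Call Cagg Ccon (fun x y => if E x y then a / s else 0) :=
  diffused_unique_maximizer_general E s hsym hreg a b hab hdvd Call Cagg Ccon hCagg hCcon
end
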